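/- arXiv:1903.11897 — 6 statements merged into one kernel-verified Lean document; each statement's English description precedes it below -/
import Mathlib

section
/- For the basic space 𝔖 = 𝔖_{τ,d,m} and 1 ≤ k < d, p ∈ [1,∞): the non-centered modified maximal operator satisfies the strong type bound ‖M_k f‖_p^p ≤ 2^{p−1}(2^{p−1} + 1 + τ m^{1−p})‖f‖_p^p for all f ≥ 0. -/
/-!
Every ball `B ∋ x` of `𝔖` with dilate `kB` satisfies `B ⊆ s ⊆ kB` for one of `s = {x}`, an edge
`s = {x₀, xᵢ}`, or `s = X`, so `M_k f x` is dominated by `f x`, the mean `A` of `f` over `X`, and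
the edge means `(f x₀ + m f xᵢ) / (1 + m)`. Hence `M_k f x₀ ≤ max (f x₀) A + maxᵢ f xᵢ` and
`M_k f xᵢ ≤ f x₀ / (1 + m) + max (f xᵢ) A`. Raising to the power `p` with
`(a + b)^p ≤ 2^(p-1) (a^p + b^p)` and bounding `μ(X) A^p ≤ ‖f‖_p^p` by Jensen gives the estimate;
the term `τ m^(1-p)` comes from the weight `m (1 + m)^(-p) ≤ m^(1-p)` of `f x₀` at the points `xᵢ`.
-/

open scoped ENNReal Classical

/-- The metric of the basic space `𝔖_{τ,d,m}`: `ρ(x,y) = 1` if `x_0 ∈ {x,y}`, `ρ(x,y) = d`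
otherwise (for `x ≠ y`). -/
noncomputable def rhoS (τ : ℕ) (d : ℝ) (x y : Fin (τ + 1)) : ℝ :=
  if x = y then 0 else if x = 0 ∨ y = 0 then 1 else d

/-- The measure of `𝔖_{τ,d,m}`: `μ({x_0}) = 1` and `μ({x_i}) = m` for `i ≥ 1`. -/
noncomputable def muS (τ : ℕ) (m : ℝ) (x : Fin (τ + 1)) : ℝ≥0∞ :=
  if x = 0 then 1 else ENNReal.ofReal m

/-- Open balls of `𝔖_{τ,d,m}`. -/
noncomputable def ballS (τ : ℕ) (d : ℝ) (c : Fin (τ + 1)) (r : ℝ) : Finset (Fin (τ + 1)) :=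
  Finset.univ.filter (fun y => rhoS τ d c y < r)

/-- The non-centered modified Hardy–Littlewood maximal operator `M_k` on `𝔖_{τ,d,m}`. -/
noncomputable def MkS (τ : ℕ) (d m k : ℝ) (f : Fin (τ + 1) → ℝ≥0∞) (x : Fin (τ + 1)) : ℝ≥0∞ :=
  ⨆ (c : Fin (τ + 1)) (r : ℝ) (_ : 0 < r) (_ : x ∈ ballS τ d c r),
    (∑ y ∈ ballS τ d c r, f y * muS τ m y) / (∑ y ∈ ballS τ d c (k * r), muS τ m y)

open Finset

namespace ENNReal

theorem sum_mul_rpow_div_sum_le {ι : Type*} (s : Finset ι) (w z : ι → ℝ≥0∞)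
    (hw₀ : ∑ i ∈ s, w i ≠ 0) (hw : ∑ i ∈ s, w i ≠ ⊤) {p : ℝ} (hp : 1 ≤ p) :
    (∑ i ∈ s, w i) * ((∑ i ∈ s, z i * w i) / ∑ i ∈ s, w i) ^ p ≤ ∑ i ∈ s, z i ^ p * w i := by
  set W := ∑ i ∈ s, w i
  have hnorm : ∑ i ∈ s, w i / W = 1 := by
    simp only [div_eq_mul_inv, ← Finset.sum_mul]
    exact ENNReal.mul_inv_cancel hw₀ hw
  have hmean (g : ι → ℝ≥0∞) : ∑ i ∈ s, w i / W * g i = (∑ i ∈ s, g i * w i) / W := by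
    simp only [div_eq_mul_inv, Finset.sum_mul]
    exact sum_congr rfl fun i _ => by ring
  have jensen := ENNReal.rpow_arith_mean_le_arith_mean_rpow s (fun i => w i / W) z hnorm hp
  rw [hmean, hmean (z · ^ p)] at jensen
  calc W * ((∑ i ∈ s, z i * w i) / W) ^ p ≤ W * ((∑ i ∈ s, z i ^ p * w i) / W) := by gcongr
    _ = ∑ i ∈ s, z i ^ p * w i := ENNReal.mul_div_cancel hw₀ hw

theorem sup_rpow_le_add_rpow (a b : ℝ≥0∞) {p : ℝ} (hp : 0 ≤ p) : (a ⊔ b) ^ p ≤ a ^ p + b ^ p := by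
  rw [(ENNReal.monotone_rpow_of_nonneg hp).map_max]
  exact sup_le le_self_add le_add_self

theorem iSup_rpow_le_sum_rpow {ι : Type*} [Fintype ι] (g : ι → ℝ≥0∞) {p : ℝ} (hp : 0 < p) :
    (⨆ i, g i) ^ p ≤ ∑ i, g i ^ p := by
  rcases isEmpty_or_nonempty ι with hι | hι
  · simp [ENNReal.zero_rpow_of_pos hp]
  obtain ⟨i, hi⟩ := Finite.exists_max g
  rw [le_antisymm (iSup_le hi) (le_iSup g i)]
  exact single_le_sum (f := (g · ^ p)) (fun j _ => zero_le) (mem_univ i)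

section Constants

variable {a : ℝ≥0∞} {p : ℝ}

theorem one_le_two_rpow_sub_one (hp : 1 ≤ p) : 1 ≤ (2 : ℝ≥0∞) ^ (p - 1) := by
  simpa using rpow_le_rpow_of_exponent_le one_le_two (sub_nonneg.mpr hp)

theorem mul_inv_one_add_rpow_le (ha₀ : a ≠ 0) (ha : a ≠ ⊤) (hp : 0 ≤ p) :
    a * (1 + a)⁻¹ ^ p ≤ a ^ (1 - p) := by
  rw [sub_eq_add_neg, rpow_add _ _ ha₀ ha, rpow_one, rpow_neg, ← inv_rpow]
  gcongr
  exact le_add_self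

theorem one_add_two_mul_le {n : ℕ} (ha : 1 ≤ a) (ha' : a ≠ ⊤) (hn : 1 ≤ n) (hp : 1 ≤ p) :
    1 + 2 * a ≤ a * (2 ^ (p - 1) + 1 + n * a ^ (1 - p)) := by
  have ha₀ : a ≠ 0 := (zero_lt_one.trans_le ha).ne'
  rw [mul_add, mul_add, mul_one]
  rcases le_total p 2 with hp2 | hp2
  · have hpow : 1 ≤ a * a ^ (1 - p) := by
      have h := rpow_le_rpow_of_exponent_le ha (by linarith : (0 : ℝ) ≤ 1 + (1 - p))
      rwa [rpow_zero, rpow_add _ _ ha₀ ha', rpow_one] at h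
    calc 1 + 2 * a = a * 1 + a + 1 := by ring
      _ ≤ a * 2 ^ (p - 1) + a + a * (n * a ^ (1 - p)) := by
        gcongr
        · exact one_le_two_rpow_sub_one hp
        · calc 1 ≤ a * a ^ (1 - p) := hpow
            _ ≤ a * (n * a ^ (1 - p)) := by
              gcongr
              exact le_mul_of_one_le_left' (by exact_mod_cast hn)
  · have htwo : 2 ≤ (2 : ℝ≥0∞) ^ (p - 1) := by
      simpa using rpow_le_rpow_of_exponent_le one_le_two (by linarith : (1 : ℝ) ≤ p - 1)
    calc 1 + 2 * a ≤ a * 2 + a := by rw [mul_comm, add_comm]; gcongr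
      _ ≤ a * 2 ^ (p - 1) + a := by gcongr
      _ ≤ a * 2 ^ (p - 1) + a + a * (n * a ^ (1 - p)) := le_self_add

theorem two_add_mul_mul_inv_one_add_rpow_le {n : ℕ} (ha₀ : a ≠ 0) (ha : a ≠ ⊤) (hp : 1 ≤ p) :
    2 + n * a * (1 + a)⁻¹ ^ p ≤ 2 ^ (p - 1) + 1 + n * a ^ (1 - p) := by
  rw [mul_assoc]
  gcongr
  · calc (2 : ℝ≥0∞) = 1 + 1 := one_add_one_eq_two.symm
      _ ≤ 2 ^ (p - 1) + 1 := by gcongr; exact one_le_two_rpow_sub_one hp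
  · exact mul_inv_one_add_rpow_le ha₀ ha (by linarith)

end Constants

end ENNReal

section BasicSpace

variable {τ : ℕ} {d m k : ℝ}

theorem mem_ballS {c y : Fin (τ + 1)} {r : ℝ} : y ∈ ballS τ d c r ↔ rhoS τ d c y < r := by
  simp [ballS]

theorem mem_ballS_self (c : Fin (τ + 1)) {r : ℝ} (hr : 0 < r) : c ∈ ballS τ d c r := by
  simpa [mem_ballS, rhoS] using hr

theorem ballS_subset_singleton (hd : 1 ≤ d) (c : Fin (τ + 1)) {r : ℝ} (hr : r ≤ 1) :
    ballS τ d c r ⊆ {c} := by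
  intro y hy
  rw [mem_ballS, rhoS] at hy
  rw [mem_singleton]
  by_contra hne
  split_ifs at hy with h₁ <;> first | exact hne h₁.symm | linarith

theorem ballS_zero_eq_univ {r : ℝ} (hr : 1 < r) : ballS τ d 0 r = univ := by
  ext y
  simp only [mem_ballS, rhoS, mem_univ, iff_true]
  split_ifs with h₁ h₂
  · linarith
  · linarith
  · simp at h₂

theorem ballS_eq_univ (hd : 1 ≤ d) (c : Fin (τ + 1)) {r : ℝ} (hr : d < r) :
    ballS τ d c r = univ := by
  ext y
  simp only [mem_ballS, rhoS, mem_univ, iff_true]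
  split_ifs <;> linarith

theorem ballS_subset_pair {c : Fin (τ + 1)} (hc : c ≠ 0) {r : ℝ} (hr : r ≤ d) :
    ballS τ d c r ⊆ {0, c} := by
  intro y hy
  rw [mem_ballS, rhoS] at hy
  simp only [mem_insert, mem_singleton]
  by_contra! hne
  split_ifs at hy with h₁ h₂
  · exact hne.2 h₁.symm
  · exact h₂.elim hc hne.1
  · linarith

theorem pair_subset_ballS (c : Fin (τ + 1)) {r : ℝ} (hr : 1 < r) : {0, c} ⊆ ballS τ d c r := by
  intro y hy
  simp only [mem_insert, mem_singleton] at hy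
  rcases hy with rfl | rfl
  · rw [mem_ballS, rhoS]
    split_ifs with h₁ h₂
    · linarith
    · linarith
    · simp at h₂
  · exact mem_ballS_self y (by linarith)

variable (τ m) in
noncomputable def avgS (f : Fin (τ + 1) → ℝ≥0∞) (s : Finset (Fin (τ + 1))) : ℝ≥0∞ :=
  (∑ y ∈ s, f y * muS τ m y) / ∑ y ∈ s, muS τ m y

theorem avgS_le {f : Fin (τ + 1) → ℝ≥0∞} {s : Finset (Fin (τ + 1))} {b : ℝ≥0∞}
    (h : ∀ y ∈ s, f y ≤ b) : avgS τ m f s ≤ b := by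
  refine ENNReal.div_le_of_le_mul ?_
  rw [mul_sum]
  exact sum_le_sum fun y hy => mul_le_mul_left (h y hy) _

theorem avgS_singleton (hm : 0 < m) (f : Fin (τ + 1) → ℝ≥0∞) (c : Fin (τ + 1)) :
    avgS τ m f {c} = f c := by
  have hμ : muS τ m c ≠ 0 := by unfold muS; split_ifs <;> simp [hm]
  have hμ' : muS τ m c ≠ ⊤ := by unfold muS; split_ifs <;> simp
  simp only [avgS, sum_singleton]
  exact ENNReal.mul_div_cancel_right hμ hμ'

theorem avgS_pair_le (f : Fin (τ + 1) → ℝ≥0∞) {c : Fin (τ + 1)} (hc : c ≠ 0) :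
    avgS τ m f {0, c} ≤ (1 + ENNReal.ofReal m)⁻¹ * f 0 + f c := by
  rw [avgS, sum_pair hc.symm, sum_pair hc.symm]
  simp only [muS, if_pos, if_neg hc, mul_one]
  rw [ENNReal.add_div, ENNReal.div_eq_inv_mul]
  gcongr
  refine ENNReal.div_le_of_le_mul ?_
  gcongr
  exact le_add_self

theorem MkS_le (hd : 1 ≤ d) (hm : 0 < m) (hk : 1 ≤ k) {f : Fin (τ + 1) → ℝ≥0∞}
    {x : Fin (τ + 1)} {b : ℝ≥0∞} (hfx : f x ≤ b) (hA : avgS τ m f univ ≤ b)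
    (hpair : ∀ c ≠ 0, x = 0 ∨ x = c → avgS τ m f {0, c} ≤ b) : MkS τ d m k f x ≤ b := by
  refine iSup₂_le fun c r => iSup₂_le fun hr hx => ?_
  have hrk : r ≤ k * r := le_mul_of_one_le_left hr.le hk
  have sandwich (s : Finset (Fin (τ + 1))) (h₁ : ballS τ d c r ⊆ s)
      (h₂ : s ⊆ ballS τ d c (k * r)) :
      (∑ y ∈ ballS τ d c r, f y * muS τ m y) / (∑ y ∈ ballS τ d c (k * r), muS τ m y)
        ≤ avgS τ m f s :=
    ENNReal.div_le_div (sum_le_sum_of_subset h₁) (sum_le_sum_of_subset h₂)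
  rcases le_or_gt r 1 with hr1 | hr1
  · have hsub := ballS_subset_singleton hd c hr1
    obtain rfl : x = c := mem_singleton.mp (hsub hx)
    calc _ ≤ avgS τ m f {x} :=
          sandwich _ hsub (singleton_subset_iff.mpr (mem_ballS_self x (by positivity)))
      _ = f x := avgS_singleton hm f x
      _ ≤ b := hfx
  have hkr : 1 < k * r := hr1.trans_le hrk
  by_cases hfar : c = 0 ∨ d < r
  · have huniv : ballS τ d c (k * r) = univ := by
      rcases hfar with rfl | hdr
      · exact ballS_zero_eq_univ hkr
      · exact ballS_eq_univ hd c (hdr.trans_le hrk)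
    exact (sandwich univ (subset_univ _) huniv.ge).trans hA
  push Not at hfar
  have hsub := ballS_subset_pair hfar.1 hfar.2
  refine (sandwich {0, c} hsub (pair_subset_ballS c hkr)).trans (hpair c hfar.1 ?_)
  simpa using hsub hx

theorem MkS_zero_le (hd : 1 ≤ d) (hm : 0 < m) (hk : 1 ≤ k) (f : Fin (τ + 1) → ℝ≥0∞) :
    MkS τ d m k f 0 ≤ (f 0 ⊔ avgS τ m f univ) + ⨆ i : Fin τ, f i.succ := by
  refine MkS_le hd hm hk (le_sup_left.trans le_self_add) (le_sup_right.trans le_self_add)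
    fun c hc _ => avgS_le fun y hy => ?_
  obtain ⟨i, rfl⟩ := Fin.exists_succ_eq.mpr hc
  rcases mem_insert.mp hy with rfl | hy
  · exact le_sup_left.trans le_self_add
  · rw [mem_singleton.mp hy]
    exact (le_iSup (fun j : Fin τ => f j.succ) i).trans le_add_self

theorem MkS_succ_le (hd : 1 ≤ d) (hm : 0 < m) (hk : 1 ≤ k) (f : Fin (τ + 1) → ℝ≥0∞)
    (i : Fin τ) :
    MkS τ d m k f i.succ ≤ (1 + ENNReal.ofReal m)⁻¹ * f 0 + (f i.succ ⊔ avgS τ m f univ) := by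
  refine MkS_le hd hm hk (le_sup_left.trans le_add_self) (le_sup_right.trans le_add_self)
    fun c hc hx => ?_
  obtain rfl : c = i.succ := (hx.resolve_left (Fin.succ_ne_zero i)).symm
  exact (avgS_pair_le f hc).trans (by gcongr; exact le_sup_left)

theorem sum_mul_muS (g : Fin (τ + 1) → ℝ≥0∞) :
    ∑ x, g x * muS τ m x = g 0 + ENNReal.ofReal m * ∑ i : Fin τ, g i.succ := by
  simp [Fin.sum_univ_succ, muS, mul_sum, mul_comm]

end BasicSpace

section Estimates

variable {τ : ℕ} {d m k p : ℝ}

theorem MkS_zero_rpow_le (hd : 1 ≤ d) (hm : 0 < m) (hk : 1 ≤ k) (hp : 1 ≤ p)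
    (f : Fin (τ + 1) → ℝ≥0∞) :
    MkS τ d m k f 0 ^ p
      ≤ 2 ^ (p - 1) * (f 0 ^ p + avgS τ m f univ ^ p + ∑ i : Fin τ, f i.succ ^ p) := by
  calc MkS τ d m k f 0 ^ p ≤ ((f 0 ⊔ avgS τ m f univ) + ⨆ i : Fin τ, f i.succ) ^ p :=
        ENNReal.rpow_le_rpow (MkS_zero_le hd hm hk f) (by linarith)
    _ ≤ 2 ^ (p - 1) * ((f 0 ⊔ avgS τ m f univ) ^ p + (⨆ i : Fin τ, f i.succ) ^ p) :=
        ENNReal.rpow_add_le_mul_rpow_add_rpow _ _ hp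
    _ ≤ _ := by
        gcongr
        · exact ENNReal.sup_rpow_le_add_rpow _ _ (by linarith)
        · exact ENNReal.iSup_rpow_le_sum_rpow _ (by linarith)

theorem MkS_succ_rpow_le (hd : 1 ≤ d) (hm : 0 < m) (hk : 1 ≤ k) (hp : 1 ≤ p)
    (f : Fin (τ + 1) → ℝ≥0∞) (i : Fin τ) :
    MkS τ d m k f i.succ ^ p ≤ 2 ^ (p - 1) *
      ((1 + ENNReal.ofReal m)⁻¹ ^ p * f 0 ^ p + (f i.succ ^ p + avgS τ m f univ ^ p)) := by
  calc MkS τ d m k f i.succ ^ p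
        ≤ ((1 + ENNReal.ofReal m)⁻¹ * f 0 + (f i.succ ⊔ avgS τ m f univ)) ^ p :=
        ENNReal.rpow_le_rpow (MkS_succ_le hd hm hk f i) (by linarith)
    _ ≤ 2 ^ (p - 1) * (((1 + ENNReal.ofReal m)⁻¹ * f 0) ^ p + (f i.succ ⊔ avgS τ m f univ) ^ p) :=
        ENNReal.rpow_add_le_mul_rpow_add_rpow _ _ hp
    _ ≤ _ := by
        rw [ENNReal.mul_rpow_of_nonneg _ _ (by linarith)]
        gcongr
        exact ENNReal.sup_rpow_le_add_rpow _ _ (by linarith)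

theorem muS_total_mul_avgS_rpow_le (hp : 1 ≤ p) (f : Fin (τ + 1) → ℝ≥0∞) :
    (1 + τ * ENNReal.ofReal m) * avgS τ m f univ ^ p ≤ ∑ x, f x ^ p * muS τ m x := by
  have htotal : ∑ x, muS τ m x = 1 + τ * ENNReal.ofReal m := by
    simpa [mul_comm] using sum_mul_muS (τ := τ) (m := m) 1
  rw [← htotal]
  exact ENNReal.sum_mul_rpow_div_sum_le _ _ f (by simp [htotal])
    (by simp [htotal, ENNReal.mul_eq_top]) hp

theorem sum_MkS_rpow_le (hd : 1 ≤ d) (hm : 0 < m) (hk : 1 ≤ k) (hp : 1 ≤ p)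
    (f : Fin (τ + 1) → ℝ≥0∞) :
    ∑ x, MkS τ d m k f x ^ p * muS τ m x ≤ 2 ^ (p - 1) *
      ((2 + τ * ENNReal.ofReal m * (1 + ENNReal.ofReal m)⁻¹ ^ p) * f 0 ^ p
        + (1 + 2 * ENNReal.ofReal m) * ∑ i : Fin τ, f i.succ ^ p) := by
  set em := ENNReal.ofReal m
  set A := avgS τ m f univ
  set Sg := ∑ i : Fin τ, f i.succ ^ p
  have hjensen : (1 + τ * em) * A ^ p ≤ f 0 ^ p + em * Sg := by
    simpa [sum_mul_muS] using muS_total_mul_avgS_rpow_le hp f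
  calc ∑ x, MkS τ d m k f x ^ p * muS τ m x
      = MkS τ d m k f 0 ^ p + em * ∑ i : Fin τ, MkS τ d m k f i.succ ^ p := sum_mul_muS _
    _ ≤ 2 ^ (p - 1) * (f 0 ^ p + A ^ p + Sg)
          + em * ∑ i : Fin τ,
              2 ^ (p - 1) * ((1 + em)⁻¹ ^ p * f 0 ^ p + (f i.succ ^ p + A ^ p)) := by
        gcongr with i
        · exact MkS_zero_rpow_le hd hm hk hp f
        · exact MkS_succ_rpow_le hd hm hk hp f i
    _ = 2 ^ (p - 1) * ((1 + τ * em * (1 + em)⁻¹ ^ p) * f 0 ^ p + (1 + em) * Sg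
          + (1 + τ * em) * A ^ p) := by
        simp only [← mul_sum, sum_add_distrib, sum_const, card_univ, Fintype.card_fin,
          nsmul_eq_mul, Sg]
        ring
    _ ≤ 2 ^ (p - 1) * ((1 + τ * em * (1 + em)⁻¹ ^ p) * f 0 ^ p + (1 + em) * Sg
          + (f 0 ^ p + em * Sg)) := by gcongr
    _ = _ := by ring

end Estimates

theorem ofReal_two_rpow_mul {τ : ℕ} {m p : ℝ} (hm : 0 < m) :
    ENNReal.ofReal ((2 : ℝ) ^ (p - 1) * ((2 : ℝ) ^ (p - 1) + 1 + (τ : ℝ) * m ^ (1 - p)))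
      = 2 ^ (p - 1) * (2 ^ (p - 1) + 1 + τ * ENNReal.ofReal m ^ (1 - p)) := by
  rw [ENNReal.ofReal_mul (by positivity), ENNReal.ofReal_add (by positivity) (by positivity),
    ENNReal.ofReal_add (by positivity) zero_le_one, ENNReal.ofReal_mul (by positivity),
    ← ENNReal.ofReal_rpow_of_pos two_pos, ← ENNReal.ofReal_rpow_of_pos hm]
  simp

theorem stmt9_general (τ : ℕ) (hτ : 1 ≤ τ) (d m k p : ℝ)
    (hd1 : 1 < d) (hm : 1 < m) (hk1 : 1 ≤ k) (hp : 1 ≤ p)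
    (f : Fin (τ + 1) → ℝ≥0∞) :
    (∑ x : Fin (τ + 1), (MkS τ d m k f x) ^ p * muS τ m x)
      ≤ ENNReal.ofReal ((2 : ℝ) ^ (p - 1) * ((2 : ℝ) ^ (p - 1) + 1 + (τ : ℝ) * m ^ (1 - p)))
          * ∑ x : Fin (τ + 1), (f x) ^ p * muS τ m x := by
  have hm₀ : 0 < m := zero_lt_one.trans hm
  set em := ENNReal.ofReal m
  have hem : 1 ≤ em := ENNReal.one_le_ofReal.mpr hm.le
  calc ∑ x, MkS τ d m k f x ^ p * muS τ m x
      ≤ 2 ^ (p - 1) * ((2 + τ * em * (1 + em)⁻¹ ^ p) * f 0 ^ p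
          + (1 + 2 * em) * ∑ i : Fin τ, f i.succ ^ p) := sum_MkS_rpow_le hd1.le hm₀ hk1 hp f
    _ ≤ 2 ^ (p - 1) * ((2 ^ (p - 1) + 1 + τ * em ^ (1 - p)) * f 0 ^ p
          + em * (2 ^ (p - 1) + 1 + τ * em ^ (1 - p)) * ∑ i : Fin τ, f i.succ ^ p) := by
        gcongr 2 ^ (p - 1) * (?_ * _ + ?_ * _)
        · exact ENNReal.two_add_mul_mul_inv_one_add_rpow_le (by positivity) ENNReal.ofReal_ne_top hp
        · exact ENNReal.one_add_two_mul_le hem ENNReal.ofReal_ne_top hτ hp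
    _ = _ := by
        rw [ofReal_two_rpow_mul hm₀, sum_mul_muS]
        ring

/-- For `𝔖_{τ,d,m}`, `1 ≤ k < d` and `p ∈ [1,∞)`:
`‖M_k f‖_p^p ≤ 2^(p-1) (2^(p-1) + 1 + τ m^(1-p)) ‖f‖_p^p` for all `f ≥ 0`. -/
theorem stmt9 (τ : ℕ) (hτ : 1 ≤ τ) (d m k p : ℝ)
    (hd1 : 1 < d) (hd2 : d ≤ 2) (hm : 1 < m) (hk1 : 1 ≤ k) (hkd : k < d) (hp : 1 ≤ p)
    (f : Fin (τ + 1) → ℝ≥0∞) :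
    (∑ x : Fin (τ + 1), (MkS τ d m k f x) ^ p * muS τ m x)
      ≤ ENNReal.ofReal ((2 : ℝ) ^ (p - 1) * ((2 : ℝ) ^ (p - 1) + 1 + (τ : ℝ) * m ^ (1 - p)))
          * ∑ x : Fin (τ + 1), (f x) ^ p * muS τ m x :=
  stmt9_general τ hτ d m k p hd1 hm hk1 hp f
end

section
/- For the basic space 𝔖 = 𝔖_{τ,d,m}, 1 ≤ k < d, and p ∈ [1,∞): testing the centered operator on f = δ_{x_0} gives M_k^c f(x_i) = 1/(1+m) for i = 1,…,τ, and hence the best weak (p,p) constant satisfies c^c(k,p) ≥ (1/(3m)) (τ m)^{1/p} ≳ τ^{1/p} m^{1/p−1}. -/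
open scoped ENNReal Classical

/-- The centered modified Hardy–Littlewood maximal operator `M_k^c` on `𝔖_{τ,d,m}`. -/
noncomputable def MkcS (τ : ℕ) (d m k : ℝ) (f : Fin (τ + 1) → ℝ≥0∞) (x : Fin (τ + 1)) : ℝ≥0∞ :=
  ⨆ (r : ℝ) (_ : 0 < r),
    (∑ y ∈ ballS τ d x r, f y * muS τ m y) / (∑ y ∈ ballS τ d x (k * r), muS τ m y)

/-! At every `x_i` the best centered ball for `δ_{x_0}` has radius `d / k`: it reaches `x_0`, and its
`k`-fold enlargement is still just `{x_0, x_i}`, so `M_k^c δ_{x_0} = 1/(1+m)` there. Testing the weak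
`(p,p)` inequality on `δ_{x_0}` (of `p`-norm `1`) at height `1/(3m) < 1/(1+m)` then gives a level
set of measure `τ m`. -/

namespace BasicSpace

variable {τ : ℕ} {d m : ℝ} {i : Fin (τ + 1)} {r : ℝ}

def delta0 (τ : ℕ) : Fin (τ + 1) → ℝ≥0∞ := fun x => if x = 0 then 1 else 0

lemma rhoS_zero_right (hi : i ≠ 0) : rhoS τ d i 0 = 1 := by
  simp [rhoS, hi]

lemma zero_mem_ballS_iff (hi : i ≠ 0) : (0 : Fin (τ + 1)) ∈ ballS τ d i r ↔ 1 < r := by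
  simp [ballS, rhoS_zero_right hi]

lemma pair_subset_ballS (hi : i ≠ 0) (hr : 1 < r) : {0, i} ⊆ ballS τ d i r := by
  intro y hy
  simp only [Finset.mem_insert, Finset.mem_singleton] at hy
  rcases hy with rfl | rfl
  · exact (zero_mem_ballS_iff hi).mpr hr
  · exact Finset.mem_filter.mpr ⟨Finset.mem_univ _, by rw [rhoS, if_pos rfl]; linarith⟩

lemma ballS_self_eq_pair (hd : 1 < d) (hi : i ≠ 0) : ballS τ d i d = {0, i} := by
  refine subset_antisymm (fun y hy => ?_) (pair_subset_ballS hi hd)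
  have hy := (Finset.mem_filter.mp hy).2
  unfold rhoS at hy
  simp only [Finset.mem_insert, Finset.mem_singleton]
  split_ifs at hy with hiy hy0
  · exact Or.inr hiy.symm
  · exact Or.inl (hy0.resolve_left hi)
  · exact absurd hy (lt_irrefl d)

lemma muS_of_ne_zero {x : Fin (τ + 1)} (hx : x ≠ 0) : muS τ m x = ENNReal.ofReal m := if_neg hx

lemma sum_muS_pair (hi : i ≠ 0) :
    ∑ y ∈ ({0, i} : Finset (Fin (τ + 1))), muS τ m y = 1 + ENNReal.ofReal m := by
  rw [Finset.sum_pair (Ne.symm hi), muS_of_ne_zero hi]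
  rfl

lemma one_add_le_sum_muS_ballS (hi : i ≠ 0) (hr : 1 < r) :
    1 + ENNReal.ofReal m ≤ ∑ y ∈ ballS τ d i r, muS τ m y :=
  sum_muS_pair hi ▸ Finset.sum_le_sum_of_subset (pair_subset_ballS hi hr)

lemma sum_delta0_mul_muS_ballS (hi : i ≠ 0) :
    ∑ y ∈ ballS τ d i r, delta0 τ y * muS τ m y = if 1 < r then 1 else 0 := by
  have hδ (y : Fin (τ + 1)) : delta0 τ y * muS τ m y = if y = 0 then 1 else 0 := by
    by_cases hy : y = 0 <;> simp [delta0, muS, hy]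
  simp only [hδ, Finset.sum_ite_eq', zero_mem_ballS_iff hi]

theorem MkcS_delta0 {k : ℝ} (hd : 1 < d) (hk : 1 ≤ k) (hkd : k < d) (hi : i ≠ 0) :
    MkcS τ d m k (delta0 τ) i = (1 + ENNReal.ofReal m)⁻¹ := by
  apply le_antisymm
  · refine iSup₂_le fun r hr => ?_
    rw [sum_delta0_mul_muS_ballS hi]
    split_ifs with hr1
    · have hkr : 1 < k * r := by nlinarith
      simpa only [one_div] using ENNReal.div_le_div_left (one_add_le_sum_muS_ballS hi hkr) 1
    · simp
  · have hk0 : 0 < k := by linarith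
    refine le_iSup₂_of_le (d / k) (by positivity) (le_of_eq ?_)
    rw [sum_delta0_mul_muS_ballS hi, if_pos ((one_lt_div hk0).mpr hkd),
      mul_div_cancel₀ d hk0.ne', ballS_self_eq_pair hd hi, sum_muS_pair hi, one_div]

lemma sum_delta0_rpow_mul_muS {p : ℝ} (hp : 0 < p) :
    ∑ x, delta0 τ x ^ p * muS τ m x = 1 := by
  rw [Finset.sum_eq_single 0 (fun b _ hb => by simp [delta0, hb, hp]) (by simp)]
  simp [delta0, muS]

lemma sum_muS_ne_zero :
    ∑ x ∈ Finset.univ.filter (· ≠ (0 : Fin (τ + 1))), muS τ m x = ENNReal.ofReal (τ * m) := by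
  rw [Finset.sum_congr rfl fun x hx => muS_of_ne_zero (Finset.mem_filter.mp hx).2,
    Finset.sum_const, Finset.filter_ne', Finset.card_erase_of_mem (Finset.mem_univ _),
    Finset.card_univ, Fintype.card_fin, ENNReal.ofReal_mul (Nat.cast_nonneg τ), nsmul_eq_mul,
    ENNReal.ofReal_natCast, Nat.add_sub_cancel]

end BasicSpace

open BasicSpace in
theorem stmt10_general (τ : ℕ) (d m k p : ℝ)
    (hd1 : 1 < d) (hm : 1 < m) (hk1 : 1 ≤ k) (hkd : k < d) (hp : 1 ≤ p) :
    (∀ i : Fin (τ + 1), i ≠ 0 →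
      MkcS τ d m k (fun x => if x = 0 then 1 else 0) i = (1 + ENNReal.ofReal m)⁻¹) ∧
    ∀ C : ℝ≥0∞,
      (∀ (f : Fin (τ + 1) → ℝ≥0∞) (lam : ℝ≥0∞),
        lam * (∑ x ∈ Finset.univ.filter (fun x => lam < MkcS τ d m k f x), muS τ m x) ^ (1 / p)
          ≤ C * (∑ x : Fin (τ + 1), f x ^ p * muS τ m x) ^ (1 / p)) →
      ENNReal.ofReal ((1 / (3 * m)) * ((τ : ℝ) * m) ^ (1 / p)) ≤ C := by
  have hMδ (i : Fin (τ + 1)) (hi : i ≠ 0) := MkcS_delta0 (m := m) hd1 hk1 hkd hi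
  refine ⟨hMδ, fun C hC => ?_⟩
  set lam := ENNReal.ofReal (1 / (3 * m))
  have hlam : lam < (1 + ENNReal.ofReal m)⁻¹ := by
    rw [← ENNReal.ofReal_one, ← ENNReal.ofReal_add zero_le_one (by linarith),
      ← ENNReal.ofReal_inv_of_pos (by linarith), ENNReal.ofReal_lt_ofReal_iff (by positivity),
      one_div]
    exact inv_strictAnti₀ (by linarith) (by linarith)
  have hlevel : Finset.univ.filter (· ≠ (0 : Fin (τ + 1))) ⊆
      Finset.univ.filter (fun x => lam < MkcS τ d m k (delta0 τ) x) :=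
    Finset.monotone_filter_right _ fun x _ hx => (hMδ x hx).symm ▸ hlam
  calc ENNReal.ofReal ((1 / (3 * m)) * ((τ : ℝ) * m) ^ (1 / p))
      = lam * ENNReal.ofReal (τ * m) ^ (1 / p) := by
        rw [ENNReal.ofReal_mul (by positivity),
          ENNReal.ofReal_rpow_of_nonneg (by positivity) (by positivity)]
    _ ≤ lam * (∑ x ∈ Finset.univ.filter (fun x => lam < MkcS τ d m k (delta0 τ) x),
          muS τ m x) ^ (1 / p) := by
        rw [← sum_muS_ne_zero]
        gcongr
    _ ≤ C := by
        simpa [sum_delta0_rpow_mul_muS (m := m) (by linarith : 0 < p)] using hC (delta0 τ) lam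

/-- Testing the centered operator on `f = δ_{x_0}` in `𝔖_{τ,d,m}` with `1 ≤ k < d`:
`M_k^c f (x_i) = 1/(1+m)` for `i = 1,…,τ`, and hence every weak `(p,p)` constant `C` for
`M_k^c` satisfies `C ≥ (1/(3m)) (τ m)^(1/p)`. -/
theorem stmt10 (τ : ℕ) (hτ : 1 ≤ τ) (d m k p : ℝ)
    (hd1 : 1 < d) (hd2 : d ≤ 2) (hm : 1 < m) (hk1 : 1 ≤ k) (hkd : k < d) (hp : 1 ≤ p) :
    (∀ i : Fin (τ + 1), i ≠ 0 →
      MkcS τ d m k (fun x => if x = 0 then 1 else 0) i = (1 + ENNReal.ofReal m)⁻¹) ∧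
    ∀ C : ℝ≥0∞,
      (∀ (f : Fin (τ + 1) → ℝ≥0∞) (lam : ℝ≥0∞),
        lam * (∑ x ∈ Finset.univ.filter (fun x => lam < MkcS τ d m k f x), muS τ m x) ^ (1 / p)
          ≤ C * (∑ x : Fin (τ + 1), f x ^ p * muS τ m x) ^ (1 / p)) →
      ENNReal.ofReal ((1 / (3 * m)) * ((τ : ℝ) * m) ^ (1 / p)) ≤ C :=
  stmt10_general τ d m k p hd1 hm hk1 hkd hp
end

section
/- For the basic space 𝔗 = 𝔗_{τ,d,m}, the standard centered maximal operator M^c satisfies ‖M^c f‖_p^p ≤ 2^{2p−1}(3^p + 3)‖f‖_p^p for all f ≥ 0 and p ∈ [1,∞); in particular c^c(1,p) ≤ 24. -/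
open scoped ENNReal Classical

/-- The metric of the basic space `𝔗_{τ,d,m}` on `Y = {y_0} ∪ Y° ∪ Y'`, encoded as
`Option (Fin τ × Bool)` with `none = y_0`, `some (i, false) = y°_i`, `some (i, true) = y'_i`. -/
noncomputable def rhoT (τ : ℕ) (d : ℝ) :
    Option (Fin τ × Bool) → Option (Fin τ × Bool) → ℝ := fun x y =>
  if x = y then 0
  else
    match x, y with
    | none, none => 0
    | none, some (_, false) => 1
    | some (_, false), none => 1
    | none, some (_, true) => (d + 1) / 2
    | some (_, true), none => (d + 1) / 2
    | some (_, false), some (_, false) => (d + 1) / 2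
    | some (_, true), some (_, true) => (d + 1) / 2
    | some (i, false), some (j, true) => if i = j then 1 else d
    | some (i, true), some (j, false) => if i = j then 1 else d

/-- The measure of `𝔗_{τ,d,m}`: `μ({y_0}) = 1`, `μ({y°_i}) = 1/τ`, `μ({y'_i}) = m`. -/
noncomputable def muT (τ : ℕ) (m : ℝ) : Option (Fin τ × Bool) → ℝ≥0∞ := fun x =>
  match x with
  | none => 1
  | some (_, false) => (τ : ℝ≥0∞)⁻¹
  | some (_, true) => ENNReal.ofReal m

/-- Open balls of `𝔗_{τ,d,m}`. -/
noncomputable def ballT (τ : ℕ) (d : ℝ) (c : Option (Fin τ × Bool)) (r : ℝ) :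
    Finset (Option (Fin τ × Bool)) :=
  Finset.univ.filter (fun y => rhoT τ d c y < r)

/-- The (standard, centered) Hardy–Littlewood maximal operator `M^c` on `𝔗_{τ,d,m}`. -/
noncomputable def McT (τ : ℕ) (d m : ℝ) (f : Option (Fin τ × Bool) → ℝ≥0∞)
    (x : Option (Fin τ × Bool)) : ℝ≥0∞ :=
  ⨆ (r : ℝ) (_ : 0 < r),
    (∑ y ∈ ballT τ d x r, f y * muT τ m y) / (∑ y ∈ ballT τ d x r, muT τ m y)

/-!
Jensen's inequality on each ball gives `(M^c f)^p ≤ M^c (f^p)` pointwise, so both claims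
follow (the second by Chebyshev) from the `L¹` bound `‖M^c g‖₁ ≤ 5 ‖g‖₁`. For that, note that
balls of radius `≤ 1` are singletons. A larger ball centred in `Y ∖ Y'` contains `y₀`, of mass
`1`, so the average is at most `‖g‖₁`. A ball centred at `y'ᵢ` either lies in `Yᵢ` and contains
`y'ᵢ`, of mass `m`, or contains `{y₀} ∪ Y'`, of mass `1 + τ m`. Weighting these bounds by `μ`
and summing over the centres costs at most `5 ‖g‖₁`.
-/

open Finset

section WeightedAverage

variable {α : Type*} (w g : α → ℝ≥0∞)

noncomputable def wavg (B : Finset α) : ℝ≥0∞ :=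
  (∑ y ∈ B, g y * w y) / ∑ y ∈ B, w y

lemma wavg_singleton_le (x : α) : wavg w g {x} ≤ g x := by
  simpa only [wavg, sum_singleton] using ENNReal.div_le_of_le_mul le_rfl

lemma wavg_le_of_subset {B C E : Finset α} (hEB : E ⊆ B) (hBC : B ⊆ C) :
    wavg w g B ≤ (∑ y ∈ C, g y * w y) / ∑ y ∈ E, w y :=
  ENNReal.div_le_div (sum_le_sum_of_subset hBC) (sum_le_sum_of_subset hEB)

lemma wavg_rpow_le {p : ℝ} (hp : 1 ≤ p) {B : Finset α} (h0 : ∑ y ∈ B, w y ≠ 0)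
    (htop : ∑ y ∈ B, w y ≠ ∞) :
    wavg w g B ^ p ≤ wavg w (fun y => g y ^ p) B := by
  unfold wavg
  set D := ∑ y ∈ B, w y
  have hnorm : ∑ y ∈ B, w y / D = 1 := by
    simp only [div_eq_mul_inv, ← sum_mul]
    exact ENNReal.mul_inv_cancel h0 htop
  have hrewrite : ∀ h : α → ℝ≥0∞, (∑ y ∈ B, h y * w y) / D = ∑ y ∈ B, w y / D * h y := by
    intro h
    simp only [div_eq_mul_inv, sum_mul]
    exact sum_congr rfl fun y _ => by ring
  rw [hrewrite, hrewrite]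
  exact ENNReal.rpow_arith_mean_le_arith_mean_rpow B _ g hnorm hp

end WeightedAverage

lemma rpow_mul_sum_filter_lt_le {α : Type*} (s : Finset α) (F w : α → ℝ≥0∞) {p : ℝ}
    (hp : 0 ≤ p) (lam : ℝ≥0∞) :
    lam ^ p * ∑ x ∈ s.filter (fun x => lam < F x), w x ≤ ∑ x ∈ s, F x ^ p * w x := by
  rw [mul_sum]
  refine (sum_le_sum fun x hx => ?_).trans (sum_le_sum_of_subset (filter_subset _ s))
  exact mul_le_mul_left (ENNReal.rpow_le_rpow (mem_filter.mp hx).2.le hp) _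

lemma mul_rpow_one_div_le {lam A B : ℝ≥0∞} {p : ℝ} (hp : 0 < p) (h : lam ^ p * A ≤ B) :
    lam * A ^ (1 / p) ≤ B ^ (1 / p) := by
  calc lam * A ^ (1 / p) = (lam ^ p * A) ^ (1 / p) := by
        rw [ENNReal.mul_rpow_of_nonneg _ _ (by positivity), ← ENNReal.rpow_mul,
          mul_one_div_cancel hp.ne', ENNReal.rpow_one]
    _ ≤ B ^ (1 / p) := ENNReal.rpow_le_rpow h (by positivity)

section BasicSpace

variable {τ : ℕ} {d m : ℝ}

lemma McT_le {f : Option (Fin τ × Bool) → ℝ≥0∞} {x : Option (Fin τ × Bool)} {c : ℝ≥0∞}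
    (h : ∀ r, 0 < r → wavg (muT τ m) f (ballT τ d x r) ≤ c) : McT τ d m f x ≤ c :=
  iSup₂_le h

lemma wavg_le_McT (f : Option (Fin τ × Bool) → ℝ≥0∞) (x : Option (Fin τ × Bool)) {r : ℝ}
    (hr : 0 < r) : wavg (muT τ m) f (ballT τ d x r) ≤ McT τ d m f x :=
  le_iSup₂ (f := fun r (_ : 0 < r) => wavg (muT τ m) f (ballT τ d x r)) r hr

lemma mem_ballT {c y : Option (Fin τ × Bool)} {r : ℝ} :
    y ∈ ballT τ d c r ↔ rhoT τ d c y < r := by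
  simp [ballT]

lemma rhoT_self (x : Option (Fin τ × Bool)) : rhoT τ d x x = 0 := by
  simp [rhoT]

lemma one_le_rhoT (hd : 1 < d) {x y : Option (Fin τ × Bool)} (h : x ≠ y) :
    1 ≤ rhoT τ d x y := by
  rcases x with _ | ⟨i, _ | _⟩ <;> rcases y with _ | ⟨j, _ | _⟩ <;>
    simp only [rhoT, h, if_false] <;> (try split_ifs) <;> first | linarith | exact absurd rfl h

lemma ballT_eq_singleton (hd : 1 < d) {x : Option (Fin τ × Bool)} {r : ℝ} (hr0 : 0 < r)
    (hr1 : r ≤ 1) : ballT τ d x r = {x} := by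
  ext y
  rw [mem_ballT, mem_singleton]
  constructor
  · intro hy
    by_contra hxy
    exact (hr1.trans (one_le_rhoT hd (Ne.symm hxy))).not_gt hy
  · rintro rfl
    rwa [rhoT_self]

lemma rhoT_none_le_one {x : Option (Fin τ × Bool)} (hx : ∀ i, x ≠ some (i, true)) :
    rhoT τ d x none ≤ 1 := by
  rcases x with _ | ⟨i, _ | _⟩
  · simp [rhoT_self]
  · simp [rhoT]
  · exact absurd rfl (hx i)

lemma ballT_some_true_subset_pair (hd : 1 < d) (i : Fin τ) {r : ℝ} (hr : r ≤ (d + 1) / 2) :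
    ballT τ d (some (i, true)) r ⊆ {some (i, false), some (i, true)} := by
  intro y hy
  rw [mem_ballT] at hy
  rcases y with _ | ⟨j, _ | _⟩
  · simp only [rhoT, reduceCtorEq, if_false] at hy
    linarith
  · by_cases hij : i = j
    · simp [hij]
    · simp only [rhoT, Option.some.injEq, Prod.mk.injEq, hij, false_and, if_false] at hy
      linarith
  · by_cases hij : i = j
    · simp [hij]
    · simp only [rhoT, Option.some.injEq, Prod.mk.injEq, hij, false_and, if_false] at hy
      linarith

def zeroPrimeSet (τ : ℕ) : Finset (Option (Fin τ × Bool)) :=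
  insert none (univ.image fun j => some (j, true))

lemma sum_muT_zeroPrimeSet :
    ∑ y ∈ zeroPrimeSet τ, muT τ m y = 1 + τ * ENNReal.ofReal m := by
  rw [zeroPrimeSet, sum_insert (by simp), sum_image fun _ _ _ _ h => by simpa using h]
  simp [muT]

lemma zeroPrimeSet_subset_ballT (i : Fin τ) {r : ℝ} (hr0 : 0 < r) (hr : (d + 1) / 2 < r) :
    zeroPrimeSet τ ⊆ ballT τ d (some (i, true)) r := by
  intro y hy
  simp only [zeroPrimeSet, mem_insert, mem_image, mem_univ, true_and] at hy
  rw [mem_ballT]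
  rcases hy with rfl | ⟨j, rfl⟩
  · simpa [rhoT] using hr
  · by_cases hij : i = j
    · rwa [hij, rhoT_self]
    · simpa [rhoT, hij] using hr

lemma muT_ne_top (x : Option (Fin τ × Bool)) : muT τ m x ≠ ∞ := by
  rcases x with _ | ⟨i, _ | _⟩
  · simp [muT]
  · simp [muT, i.pos.ne']
  · simp [muT]

lemma muT_ne_zero (hm : 0 < m) (x : Option (Fin τ × Bool)) : muT τ m x ≠ 0 := by
  rcases x with _ | ⟨i, _ | _⟩ <;> simp [muT, hm]

lemma sum_muT_ballT_ne_zero (hm : 0 < m) (x : Option (Fin τ × Bool)) {r : ℝ} (hr : 0 < r) :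
    ∑ y ∈ ballT τ d x r, muT τ m y ≠ 0 := by
  have hx : x ∈ ballT τ d x r := mem_ballT.2 (by rwa [rhoT_self])
  exact fun h => muT_ne_zero hm x (sum_eq_zero_iff.1 h x hx)

lemma McT_rpow_le (hm : 0 < m) {p : ℝ} (hp : 1 ≤ p) (f : Option (Fin τ × Bool) → ℝ≥0∞)
    (x : Option (Fin τ × Bool)) : McT τ d m f x ^ p ≤ McT τ d m (fun y => f y ^ p) x := by
  have hp₀ : 0 < p := by linarith
  rw [← ENNReal.le_rpow_inv_iff hp₀]
  refine McT_le fun r hr => ?_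
  rw [ENNReal.le_rpow_inv_iff hp₀]
  refine (wavg_rpow_le _ f hp (sum_muT_ballT_ne_zero hm x hr) ?_).trans (wavg_le_McT _ x hr)
  exact ENNReal.sum_ne_top.2 fun y _ => muT_ne_top y

variable (g : Option (Fin τ × Bool) → ℝ≥0∞)

lemma McT_le_add_sum (hd : 1 < d) {x : Option (Fin τ × Bool)} (hx : ∀ i, x ≠ some (i, true)) :
    McT τ d m g x ≤ g x + ∑ y, g y * muT τ m y := by
  refine McT_le fun r hr => ?_
  rcases le_or_gt r 1 with hr1 | hr1
  · rw [ballT_eq_singleton hd hr hr1]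
    exact (wavg_singleton_le _ _ x).trans le_self_add
  · have hnone : {none} ⊆ ballT τ d x r :=
      singleton_subset_iff.2 (mem_ballT.2 ((rhoT_none_le_one hx).trans_lt hr1))
    calc wavg (muT τ m) g (ballT τ d x r)
        ≤ (∑ y, g y * muT τ m y) / ∑ y ∈ {none}, muT τ m y :=
          wavg_le_of_subset _ _ hnone (subset_univ _)
      _ = ∑ y, g y * muT τ m y := by simp [muT]
      _ ≤ _ := le_add_self

lemma McT_some_true_le (hd : 1 < d) (i : Fin τ) :
    McT τ d m g (some (i, true)) ≤ g (some (i, true))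
      + (∑ y ∈ {some (i, false), some (i, true)}, g y * muT τ m y) / ENNReal.ofReal m
      + (∑ y, g y * muT τ m y) / (1 + τ * ENNReal.ofReal m) := by
  refine McT_le fun r hr => ?_
  rcases le_or_gt r 1 with hr1 | hr1
  · rw [ballT_eq_singleton hd hr hr1]
    exact (wavg_singleton_le _ _ _).trans (le_self_add.trans le_self_add)
  rcases le_or_gt r ((d + 1) / 2) with hr2 | hr2
  · have hcenter : {some (i, true)} ⊆ ballT τ d (some (i, true)) r :=
      singleton_subset_iff.2 (mem_ballT.2 (by rwa [rhoT_self]))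
    refine (wavg_le_of_subset _ _ hcenter (ballT_some_true_subset_pair hd i hr2)).trans ?_
    simpa only [sum_singleton, muT] using le_add_self.trans le_self_add
  · refine (wavg_le_of_subset _ _ (zeroPrimeSet_subset_ballT i hr hr2) (subset_univ _)).trans ?_
    rw [sum_muT_zeroPrimeSet]
    exact le_add_self

lemma sum_option_fin_bool {M : Type*} [AddCommMonoid M] (F : Option (Fin τ × Bool) → M) :
    ∑ x, F x = F none + ∑ i, F (some (i, false)) + ∑ i, F (some (i, true)) := by
  simp only [Fintype.sum_option, Fintype.sum_prod_type, Fintype.sum_bool, sum_add_distrib]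
  abel

lemma sum_McT_mul_muT_le (hd : 1 < d) (hm : 0 < m) :
    ∑ x, McT τ d m g x * muT τ m x ≤ 5 * ∑ x, g x * muT τ m x := by
  set M := ENNReal.ofReal m
  set S := ∑ x, g x * muT τ m x
  set G₀ := ∑ i : Fin τ, g (some (i, false)) * (τ : ℝ≥0∞)⁻¹
  set G₁ := ∑ i : Fin τ, g (some (i, true)) * M
  have hS : g none * 1 + G₀ + G₁ = S := (sum_option_fin_bool fun x => g x * muT τ m x).symm
  have hM₀ : M ≠ 0 := ENNReal.ofReal_ne_zero_iff.2 hm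
  have hY₀ : ∑ i : Fin τ, (g (some (i, false)) + S) * (τ : ℝ≥0∞)⁻¹ ≤ G₀ + S := by
    simp only [add_mul, sum_add_distrib, sum_const, card_univ, Fintype.card_fin, nsmul_eq_mul]
    gcongr
    calc (τ : ℝ≥0∞) * (S * (τ : ℝ≥0∞)⁻¹) = S * (τ * (τ : ℝ≥0∞)⁻¹) := by ring
      _ ≤ S * 1 := by gcongr; exact ENNReal.mul_inv_le_one _
      _ = S := mul_one S
  have hY' : ∀ i, McT τ d m g (some (i, true)) * M ≤ g (some (i, true)) * M
      + (g (some (i, false)) * (τ : ℝ≥0∞)⁻¹ + g (some (i, true)) * M)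
      + S / (1 + τ * M) * M := by
    intro i
    refine (mul_le_mul_left (McT_some_true_le g hd i) M).trans_eq ?_
    rw [sum_pair (by simp), add_mul, add_mul, ENNReal.div_mul_cancel hM₀ ENNReal.ofReal_ne_top]
    rfl
  have hY'_sum : ∑ i : Fin τ, (g (some (i, true)) * M
      + (g (some (i, false)) * (τ : ℝ≥0∞)⁻¹ + g (some (i, true)) * M)
      + S / (1 + τ * M) * M) ≤ G₁ + (G₀ + G₁) + S := by
    simp only [sum_add_distrib, sum_const, card_univ, Fintype.card_fin, nsmul_eq_mul]
    gcongr
    calc (τ : ℝ≥0∞) * (S / (1 + τ * M) * M) = τ * M * (S / (1 + τ * M)) := by ring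
      _ ≤ (1 + τ * M) * (S / (1 + τ * M)) := by gcongr; exact le_add_self
      _ ≤ S := ENNReal.mul_div_le
  calc ∑ x, McT τ d m g x * muT τ m x
      = McT τ d m g none * 1 + ∑ i, McT τ d m g (some (i, false)) * (τ : ℝ≥0∞)⁻¹
          + ∑ i, McT τ d m g (some (i, true)) * M := sum_option_fin_bool _
    _ ≤ (g none + S) * 1 + ∑ i : Fin τ, (g (some (i, false)) + S) * (τ : ℝ≥0∞)⁻¹
          + ∑ i : Fin τ, (g (some (i, true)) * M
            + (g (some (i, false)) * (τ : ℝ≥0∞)⁻¹ + g (some (i, true)) * M)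
            + S / (1 + τ * M) * M) := by
        gcongr with i _ i _
        · exact McT_le_add_sum g hd (by simp)
        · exact McT_le_add_sum g hd (by simp)
        · exact hY' i
    _ ≤ (g none * 1 + S) + (G₀ + S) + (G₁ + (G₀ + G₁) + S) := by
        rw [add_mul _ S, mul_one S]
        gcongr
    _ = (g none * 1 + G₀ + G₁) + (G₀ + G₁) + 3 * S := by ring
    _ ≤ S + S + 3 * S := by
        rw [hS]
        gcongr
        rw [← hS, add_assoc]
        exact le_add_self
    _ = 5 * S := by ring

end BasicSpace

theorem stmt12_general (τ : ℕ) (d m p : ℝ)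
    (hd1 : 1 < d) (hm : 1 < m) (hp : 1 ≤ p)
    (f : Option (Fin τ × Bool) → ℝ≥0∞) :
    (∑ x : Option (Fin τ × Bool), (McT τ d m f x) ^ p * muT τ m x)
      ≤ (2 : ℝ≥0∞) ^ (2 * p - 1) * ((3 : ℝ≥0∞) ^ p + 3)
          * ∑ x : Option (Fin τ × Bool), (f x) ^ p * muT τ m x ∧
    ∀ lam : ℝ≥0∞,
      lam * (∑ x ∈ Finset.univ.filter (fun x => lam < McT τ d m f x), muT τ m x) ^ (1 / p)
        ≤ 24 * (∑ x : Option (Fin τ × Bool), (f x) ^ p * muT τ m x) ^ (1 / p) := by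
  have hp₀ : 0 < p := by linarith
  set T := ∑ x, f x ^ p * muT τ m x
  have hstrong : ∑ x, McT τ d m f x ^ p * muT τ m x ≤ 5 * T :=
    (sum_le_sum fun x _ => mul_le_mul_left (McT_rpow_le (by linarith) hp f x) _).trans
      (sum_McT_mul_muT_le _ hd1 (by linarith))
  refine ⟨hstrong.trans (mul_le_mul_left ?_ T), fun lam => ?_⟩
  · calc (5 : ℝ≥0∞) ≤ 2 * (3 + 3) := by norm_num
      _ ≤ 2 ^ (2 * p - 1) * (3 ^ p + 3) := by
        gcongr
        · exact ENNReal.le_rpow_self_of_one_le one_le_two (by linarith)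
        · exact ENNReal.le_rpow_self_of_one_le (by norm_num) hp
  · refine (mul_rpow_one_div_le hp₀ ((rpow_mul_sum_filter_lt_le _ _ _ hp₀.le lam).trans
      hstrong)).trans ?_
    rw [ENNReal.mul_rpow_of_nonneg _ _ (by positivity)]
    gcongr
    calc (5 : ℝ≥0∞) ^ (1 / p) ≤ 5 ^ (1 : ℝ) :=
          ENNReal.rpow_le_rpow_of_exponent_le (by norm_num) ((div_le_one hp₀).2 hp)
      _ ≤ 24 := by norm_num

/-- For the basic space `𝔗_{τ,d,m}`, the centered maximal operator satisfies
`‖M^c f‖_p^p ≤ 2^(2p-1)(3^p + 3) ‖f‖_p^p` for all `f ≥ 0`, `p ∈ [1,∞)`; in particular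
the weak `(p,p)` constant of `M^c` is at most `24`. -/
theorem stmt12 (τ : ℕ) (hτ : 1 ≤ τ) (d m p : ℝ)
    (hd1 : 1 < d) (hd3 : d ≤ 3) (hm : 1 < m) (hp : 1 ≤ p)
    (f : Option (Fin τ × Bool) → ℝ≥0∞) :
    (∑ x : Option (Fin τ × Bool), (McT τ d m f x) ^ p * muT τ m x)
      ≤ (2 : ℝ≥0∞) ^ (2 * p - 1) * ((3 : ℝ≥0∞) ^ p + 3)
          * ∑ x : Option (Fin τ × Bool), (f x) ^ p * muT τ m x ∧
    ∀ lam : ℝ≥0∞,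
      lam * (∑ x ∈ Finset.univ.filter (fun x => lam < McT τ d m f x), muT τ m x) ^ (1 / p)
        ≤ 24 * (∑ x : Option (Fin τ × Bool), (f x) ^ p * muT τ m x) ^ (1 / p) :=
  stmt12_general τ d m p hd1 hm hp f
end

section
/- For the basic space 𝔗_{τ,d,m} and any f ≥ 0, the non-centered maximal operator satisfies M f(y′_i) ≤ 3·max{A_{{y_0,y′_i}∪Y°}(f), A_Y(f)} for each i, where A_E denotes the average over E. -/
open scoped ENNReal Classical

/-- The (standard, non-centered) Hardy–Littlewood maximal operator `M` on `𝔗_{τ,d,m}`. -/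
noncomputable def MT (τ : ℕ) (d m : ℝ) (f : Option (Fin τ × Bool) → ℝ≥0∞)
    (x : Option (Fin τ × Bool)) : ℝ≥0∞ :=
  ⨆ (c : Option (Fin τ × Bool)) (r : ℝ) (_ : 0 < r) (_ : x ∈ ballT τ d c r),
    (∑ y ∈ ballT τ d c r, f y * muT τ m y) / (∑ y ∈ ballT τ d c r, muT τ m y)

/-- The average `A_E(f) = (1/μ(E)) ∫_E f dμ` on `𝔗_{τ,d,m}`. -/
noncomputable def avgT (τ : ℕ) (m : ℝ) (s : Finset (Option (Fin τ × Bool)))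
    (f : Option (Fin τ × Bool) → ℝ≥0∞) : ℝ≥0∞ :=
  (∑ y ∈ s, f y * muT τ m y) / (∑ y ∈ s, muT τ m y)

/-- The set `{y_0, y'_i} ∪ Y°`. -/
noncomputable def EiT (τ : ℕ) (i : Fin τ) : Finset (Option (Fin τ × Bool)) :=
  insert none (insert (some (i, true))
    ((Finset.univ : Finset (Fin τ)).image (fun j => (some (j, false) : Option (Fin τ × Bool)))))

/-! A ball containing `y'_i` either contains no other `y'_j`, and then lies in
`{y_0, y'_i} ∪ Y°` while having measure at least `m ≥ (2 + m) / 3`, or it contains some `y'_j`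
with `j ≠ i`. In the second case every centre is at least as far from `y'_i` or from `y'_j` as
from `y_0` and from every `y'_k`, so the ball contains `{y_0} ∪ Y'`, whose measure `1 + τ m` is at
least a third of `μ(Y) = 2 + τ m`. Either way, the average over the ball is at most three times the
average over the larger set. -/

theorem ENNReal.div_le_mul_div_of_le {a a' b b' c : ℝ≥0∞} (ha : a ≤ a') (hb : b' ≤ c * b)
    (hb₀ : b' ≠ 0) (hb_top : b' ≠ ⊤) : a / b ≤ c * (a' / b') := by
  refine ENNReal.div_le_of_le_mul ?_
  calc a ≤ a' / b' * b' := by rw [ENNReal.div_mul_cancel hb₀ hb_top]; exact ha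
    _ ≤ a' / b' * (c * b) := by gcongr
    _ = c * (a' / b') * b := by ring

section BasicSpace

variable {τ : ℕ} {d m : ℝ}

theorem avgT_le_mul_avgT_of_subset {B E : Finset (Option (Fin τ × Bool))} (c : ℝ≥0∞)
    (f : Option (Fin τ × Bool) → ℝ≥0∞) (hBE : B ⊆ E)
    (hμ : ∑ y ∈ E, muT τ m y ≤ c * ∑ y ∈ B, muT τ m y)
    (hμ₀ : ∑ y ∈ E, muT τ m y ≠ 0) (hμ_top : ∑ y ∈ E, muT τ m y ≠ ⊤) :
    avgT τ m B f ≤ c * avgT τ m E f :=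
  ENNReal.div_le_mul_div_of_le (Finset.sum_le_sum_of_subset hBE) hμ hμ₀ hμ_top

variable (τ) in
def rootPrimesT : Finset (Option (Fin τ × Bool)) :=
  insert none (Finset.univ.image fun k => some (k, true))

theorem rhoT_le_max_of_mem_rootPrimesT (hd : 1 ≤ d) {i j : Fin τ} (hij : i ≠ j)
    (c : Option (Fin τ × Bool)) {x : Option (Fin τ × Bool)} (hx : x ∈ rootPrimesT τ) :
    rhoT τ d c x ≤ max (rhoT τ d c (some (i, true))) (rhoT τ d c (some (j, true))) := by
  simp only [rootPrimesT, Finset.mem_insert, Finset.mem_image, Finset.mem_univ, true_and] at hx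
  rcases c with _ | ⟨l, _ | _⟩ <;> rcases hx with rfl | ⟨k, rfl⟩ <;>
    simp only [rhoT, le_max_iff] <;> split_ifs <;> grind

theorem rootPrimesT_subset_ballT (hd : 1 ≤ d) {i j : Fin τ} (hij : i ≠ j)
    {c : Option (Fin τ × Bool)} {r : ℝ} (hi : some (i, true) ∈ ballT τ d c r)
    (hj : some (j, true) ∈ ballT τ d c r) : rootPrimesT τ ⊆ ballT τ d c r := by
  simp only [ballT, Finset.mem_filter, Finset.mem_univ, true_and] at hi hj
  intro x hx
  simp only [ballT, Finset.mem_filter, Finset.mem_univ, true_and]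
  exact (rhoT_le_max_of_mem_rootPrimesT hd hij c hx).trans_lt (max_lt hi hj)

theorem subset_EiT {i : Fin τ} {s : Finset (Option (Fin τ × Bool))}
    (hs : ∀ j ≠ i, some (j, true) ∉ s) : s ⊆ EiT τ i := by
  intro x hx
  rcases x with _ | ⟨k, _ | _⟩
  · simp [EiT]
  · simp [EiT]
  · have : k = i := by_contra fun hk => hs k hk hx
    simp [EiT, this]

theorem sum_muT_univ (hτ : τ ≠ 0) :
    ∑ y, muT τ m y = 2 + τ * ENNReal.ofReal m := by
  rw [Fintype.sum_option, Fintype.sum_prod_type]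
  simp only [muT, Fintype.sum_bool, Finset.sum_const, Finset.card_univ, Fintype.card_fin,
    nsmul_eq_mul, mul_add,
    ENNReal.mul_inv_cancel (Nat.cast_ne_zero.mpr hτ) (ENNReal.natCast_ne_top τ)]
  ring

theorem sum_muT_rootPrimesT : ∑ y ∈ rootPrimesT τ, muT τ m y = 1 + τ * ENNReal.ofReal m := by
  rw [rootPrimesT, Finset.sum_insert (by simp),
    Finset.sum_image (by intro a _ b _ h; simpa using h)]
  simp [muT]

theorem sum_muT_EiT (i : Fin τ) : ∑ y ∈ EiT τ i, muT τ m y = 2 + ENNReal.ofReal m := by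
  rw [EiT, Finset.sum_insert (by simp), Finset.sum_insert (by simp),
    Finset.sum_image (by intro a _ b _ h; simpa using h)]
  simp only [muT, Finset.sum_const, Finset.card_univ, Fintype.card_fin, nsmul_eq_mul,
    ENNReal.mul_inv_cancel (Nat.cast_ne_zero.mpr i.pos.ne') (ENNReal.natCast_ne_top τ)]
  ring

theorem avgT_le_three_mul_avgT_univ (hτ : τ ≠ 0) {B : Finset (Option (Fin τ × Bool))}
    (hB : rootPrimesT τ ⊆ B) (f : Option (Fin τ × Bool) → ℝ≥0∞) :
    avgT τ m B f ≤ 3 * avgT τ m Finset.univ f := by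
  have hμ : ∑ y, muT τ m y ≤ 3 * ∑ y ∈ rootPrimesT τ, muT τ m y := by
    rw [sum_muT_univ hτ, sum_muT_rootPrimesT, mul_add, mul_one]
    exact add_le_add (by norm_num) (le_mul_of_one_le_left' (by norm_num))
  refine avgT_le_mul_avgT_of_subset 3 f B.subset_univ
    (hμ.trans (by gcongr)) ?_ ?_ <;> rw [sum_muT_univ hτ]
  · exact (lt_of_lt_of_le two_pos le_self_add).ne'
  · exact ENNReal.add_ne_top.2 ⟨by simp, ENNReal.mul_ne_top (by simp) ENNReal.ofReal_ne_top⟩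

theorem avgT_le_three_mul_avgT_EiT (hm : 1 ≤ m) {i : Fin τ}
    {B : Finset (Option (Fin τ × Bool))} (hi : some (i, true) ∈ B) (hB : B ⊆ EiT τ i)
    (f : Option (Fin τ × Bool) → ℝ≥0∞) :
    avgT τ m B f ≤ 3 * avgT τ m (EiT τ i) f := by
  have hm' : 1 ≤ ENNReal.ofReal m := ENNReal.one_le_ofReal.mpr hm
  have hμ : ∑ y ∈ EiT τ i, muT τ m y ≤ 3 * ∑ y ∈ B, muT τ m y :=
    calc ∑ y ∈ EiT τ i, muT τ m y = 2 + ENNReal.ofReal m := sum_muT_EiT i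
      _ ≤ 2 * ENNReal.ofReal m + ENNReal.ofReal m := by gcongr; exact le_mul_of_one_le_right' hm'
      _ = 3 * muT τ m (some (i, true)) := by simp only [muT]; ring
      _ ≤ 3 * ∑ y ∈ B, muT τ m y := by gcongr; exact Finset.single_le_sum (by simp) hi
  refine avgT_le_mul_avgT_of_subset 3 f hB hμ ?_ ?_ <;> rw [sum_muT_EiT i]
  · exact (lt_of_lt_of_le two_pos le_self_add).ne'
  · exact ENNReal.add_ne_top.2 ⟨by simp, ENNReal.ofReal_ne_top⟩

end BasicSpace

theorem stmt13_general (τ : ℕ) (d m : ℝ)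
    (hd1 : 1 < d) (hm : 1 < m)
    (f : Option (Fin τ × Bool) → ℝ≥0∞) (i : Fin τ) :
    MT τ d m f (some (i, true))
      ≤ 3 * max (avgT τ m (EiT τ i) f) (avgT τ m Finset.univ f) := by
  refine iSup_le fun c => iSup_le fun r => iSup_le fun _ => iSup_le fun hi => ?_
  change avgT τ m (ballT τ d c r) f ≤ _
  by_cases hj : ∃ j ≠ i, some (j, true) ∈ ballT τ d c r
  · obtain ⟨j, hji, hj⟩ := hj
    calc avgT τ m (ballT τ d c r) f ≤ 3 * avgT τ m Finset.univ f :=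
          avgT_le_three_mul_avgT_univ i.pos.ne' (rootPrimesT_subset_ballT hd1.le hji hj hi) f
      _ ≤ _ := by gcongr; exact le_max_right _ _
  · push Not at hj
    calc avgT τ m (ballT τ d c r) f ≤ 3 * avgT τ m (EiT τ i) f :=
          avgT_le_three_mul_avgT_EiT hm.le hi (subset_EiT hj) f
      _ ≤ _ := by gcongr; exact le_max_left _ _

/-- For the basic space `𝔗_{τ,d,m}` and any `f ≥ 0`, the non-centered maximal operator
satisfies `M f(y'_i) ≤ 3 max{A_{{y_0,y'_i}∪Y°}(f), A_Y(f)}`. -/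
theorem stmt13 (τ : ℕ) (hτ : 1 ≤ τ) (d m : ℝ)
    (hd1 : 1 < d) (hd3 : d ≤ 3) (hm : 1 < m)
    (f : Option (Fin τ × Bool) → ℝ≥0∞) (i : Fin τ) :
    MT τ d m f (some (i, true))
      ≤ 3 * max (avgT τ m (EiT τ i) f) (avgT τ m Finset.univ f) :=
  stmt13_general τ d m hd1 hm f i
end

section
/- For p ≥ 1, τ ∈ ℕ, m > 1: ∑_{i=1}^{τ} A_{{y_0,y′_i}∪Y°}(f)^p · μ({y′_i}) ≤ 2^p ∑_{i=1}^τ f(y′_i)^p μ({y′_i}) + 2^p τ m^{1−p} ‖f·χ_{Y∖Y′}‖_1^p, for any f ≥ 0 on the basic space 𝔗_{τ,d,m}. -/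
/-!
Since `{y_0, y'_i} ∪ Y° = {y'_i} ∪ (Y ∖ Y')` and the whole mass is at least `μ({y'_i}) = m`,
the average over it is at most `f(y'_i) + m⁻¹ ‖f χ_{Y∖Y'}‖₁`. Raising this to the power `p`
costs a factor `2^p`, and multiplying by `μ({y'_i}) = m` turns `(m⁻¹)^p` into `m^{1-p}`.
-/

open scoped ENNReal Classical

/-- The set `Y ∖ Y' = {y_0} ∪ Y°`. -/
noncomputable def SYT (τ : ℕ) : Finset (Option (Fin τ × Bool)) :=
  insert none
    ((Finset.univ : Finset (Fin τ)).image (fun j => (some (j, false) : Option (Fin τ × Bool))))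

namespace ENNReal

theorem add_rpow_le_two_rpow_mul {p : ℝ} (hp : 1 ≤ p) (a b : ℝ≥0∞) :
    (a + b) ^ p ≤ 2 ^ p * (a ^ p + b ^ p) :=
  (rpow_add_le_mul_rpow_add_rpow a b hp).trans <| by
    gcongr
    · norm_num
    · linarith

theorem add_div_rpow_mul_le {p : ℝ} (hp : 1 ≤ p) {w : ℝ≥0∞} (hw₀ : w ≠ 0) (hw : w ≠ ⊤)
    (x S : ℝ≥0∞) :
    (x + S / w) ^ p * w ≤ 2 ^ p * (x ^ p * w + w ^ (1 - p) * S ^ p) := by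
  have hp₀ : 0 ≤ p := by linarith
  have hS : (S / w) ^ p * w = w ^ (1 - p) * S ^ p := by
    rw [div_eq_mul_inv, mul_rpow_of_nonneg _ _ hp₀, inv_rpow, ← rpow_neg, mul_assoc]
    nth_rewrite 2 [← rpow_one w]
    rw [← rpow_add _ _ hw₀ hw, mul_comm, neg_add_eq_sub]
  calc (x + S / w) ^ p * w ≤ 2 ^ p * (x ^ p + (S / w) ^ p) * w := by
        gcongr; exact add_rpow_le_two_rpow_mul hp _ _
    _ = 2 ^ p * (x ^ p * w + w ^ (1 - p) * S ^ p) := by rw [← hS]; ring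

end ENNReal

section BasicSpace

variable {τ : ℕ} {m : ℝ}

theorem EiT_eq_insert_SYT (i : Fin τ) : EiT τ i = insert (some (i, true)) (SYT τ) :=
  Finset.insert_comm _ _ _

theorem some_true_notMem_SYT (i : Fin τ) : some (i, true) ∉ SYT τ := by
  simp [SYT]

theorem avgT_insert_le (f : Option (Fin τ × Bool) → ℝ≥0∞) {s : Finset (Option (Fin τ × Bool))}
    {y : Option (Fin τ × Bool)} (hy : y ∉ s) (h₀ : muT τ m y ≠ 0) (h : muT τ m y ≠ ⊤) :
    avgT τ m (insert y s) f ≤ f y + (∑ z ∈ s, f z * muT τ m z) / muT τ m y := by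
  have hmass : muT τ m y ≤ ∑ z ∈ insert y s, muT τ m z := by
    rw [Finset.sum_insert hy]; exact le_self_add
  calc avgT τ m (insert y s) f ≤ (∑ z ∈ insert y s, f z * muT τ m z) / muT τ m y :=
        ENNReal.div_le_div_left hmass _
    _ = f y + (∑ z ∈ s, f z * muT τ m z) / muT τ m y := by
        rw [Finset.sum_insert hy, ENNReal.add_div, ENNReal.mul_div_cancel_right h₀ h]

end BasicSpace

theorem stmt14_general (τ : ℕ) (m p : ℝ) (hm : 1 < m) (hp : 1 ≤ p)
    (f : Option (Fin τ × Bool) → ℝ≥0∞) :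
    (∑ i : Fin τ, (avgT τ m (EiT τ i) f) ^ p * muT τ m (some (i, true)))
      ≤ (2 : ℝ≥0∞) ^ p * (∑ i : Fin τ, (f (some (i, true))) ^ p * muT τ m (some (i, true)))
        + (2 : ℝ≥0∞) ^ p * (τ : ℝ≥0∞) * (ENNReal.ofReal m) ^ (1 - p)
            * (∑ y ∈ SYT τ, f y * muT τ m y) ^ p := by
  set S := ∑ y ∈ SYT τ, f y * muT τ m y
  have hmu : ∀ i : Fin τ, muT τ m (some (i, true)) = ENNReal.ofReal m := fun _ => rfl
  have hm₀ : ENNReal.ofReal m ≠ 0 := by rw [Ne, ENNReal.ofReal_eq_zero]; linarith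
  calc (∑ i : Fin τ, (avgT τ m (EiT τ i) f) ^ p * muT τ m (some (i, true)))
      ≤ ∑ i : Fin τ, (f (some (i, true)) + S / ENNReal.ofReal m) ^ p * ENNReal.ofReal m := by
        gcongr with i
        · rw [EiT_eq_insert_SYT]
          exact avgT_insert_le f (some_true_notMem_SYT i) hm₀ ENNReal.ofReal_ne_top
        · exact (hmu i).le
    _ ≤ ∑ i : Fin τ, 2 ^ p * (f (some (i, true)) ^ p * ENNReal.ofReal m
          + ENNReal.ofReal m ^ (1 - p) * S ^ p) :=
        Finset.sum_le_sum fun _ _ =>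
          ENNReal.add_div_rpow_mul_le hp hm₀ ENNReal.ofReal_ne_top _ _
    _ = _ := by
        simp only [hmu, ← Finset.mul_sum, Finset.sum_add_distrib, Finset.sum_const,
          Finset.card_univ, Fintype.card_fin, nsmul_eq_mul]
        ring

/-- For `p ≥ 1`, `τ ∈ ℕ`, `m > 1`:
`∑_{i=1}^{τ} A_{{y_0,y'_i}∪Y°}(f)^p μ({y'_i})
  ≤ 2^p ∑_i f(y'_i)^p μ({y'_i}) + 2^p τ m^(1-p) ‖f·χ_{Y∖Y'}‖₁^p`
for any `f ≥ 0` on the basic space `𝔗_{τ,d,m}`. -/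
theorem stmt14 (τ : ℕ) (hτ : 1 ≤ τ) (m p : ℝ) (hm : 1 < m) (hp : 1 ≤ p)
    (f : Option (Fin τ × Bool) → ℝ≥0∞) :
    (∑ i : Fin τ, (avgT τ m (EiT τ i) f) ^ p * muT τ m (some (i, true)))
      ≤ (2 : ℝ≥0∞) ^ p * (∑ i : Fin τ, (f (some (i, true))) ^ p * muT τ m (some (i, true)))
        + (2 : ℝ≥0∞) ^ p * (τ : ℝ≥0∞) * (ENNReal.ofReal m) ^ (1 - p)
            * (∑ y ∈ SYT τ, f y * muT τ m y) ^ p :=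
  stmt14_general τ m p hm hp f
end

section
/- Let Λ ⊆ ℕ and let 𝔛 be the disjoint union of spaces 𝔛_n (each of diameter ≤ 1, total measure μ_n(X_n) ≤ 2^{−n}) with inter-component distance k_0 + 1, k_0 ≥ 1 fixed. Then for 1 ≤ k ≤ k_0, p ∈ [1,∞), the non-centered modified maximal operator M_{k,𝔛} is of strong type (p,p) if and only if each M_{k,𝔛_n} satisfies the strong type (p,p) inequality with a constant independent of n; moreover if each constant is ≤ c̃ then ‖M_{k,𝔛}f‖_p^p ≤ (c̃^p + 1)‖f‖_p^p. -/
open MeasureTheory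
open scoped ENNReal

/-- The non-centered modified Hardy–Littlewood maximal operator `M_k` associated with a
distance function `dist` and a measure `μ`. -/
noncomputable def MkOp {X : Type*} [MeasurableSpace X] (dist : X → X → ℝ) (μ : Measure X)
    (k : ℝ) (f : X → ℝ≥0∞) (x : X) : ℝ≥0∞ :=
  ⨆ (c : X) (r : ℝ) (_ : 0 < r) (_ : dist c x < r),
    (∫⁻ y in {y | dist c y < r}, f y ∂μ) / μ {y | dist c y < k * r}

/-- The distance on the disjoint union of the spaces `𝔛_i`: the original distance within a
component, and `k₀ + 1` between points of different components. -/
noncomputable def unionDist {Λ : Set ℕ} (X : Λ → Type*) (d : ∀ i, X i → X i → ℝ) (k₀ : ℝ) :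
    (Σ i, X i) → (Σ i, X i) → ℝ := fun x y =>
  if h : x.1 = y.1 then d x.1 x.2 (cast (congrArg X h.symm) y.2) else k₀ + 1

/-- The measure on the disjoint union of the spaces `𝔛_i`. -/
noncomputable def unionMeasure {Λ : Set ℕ} (X : Λ → Type*) [∀ i, MeasurableSpace (X i)]
    (μ : ∀ i, Measure (X i)) : Measure (Σ i, X i) :=
  Measure.sum (fun i => (μ i).map (Sigma.mk i))

/-!
Let `x` lie in the component `X i`. Other components are at distance `k₀ + 1`, so a ball around
`x` whose `k`-dilate has radius at most `k₀ + 1` lies, together with that dilate, in `X i`; a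
larger dilate is all of `X` (its radius exceeds `k₀ + 1 ≥ 1 ≥ diam`), and the corresponding
average is at most `‖f‖₁ / μ(X)`. Hence on `X i`
`M_{k,𝔛_i}(f|X_i) ≤ M_{k,𝔛} f ≤ max (M_{k,𝔛_i}(f|X_i)) (‖f‖₁ / μ(X))`.
Applied to the extension of `g` by zero, the first inequality turns the global bound into
uniform local ones. Raising the second to the `p`-th power and summing over the components gives
the bound `(c̃ ^ p + 1) ‖f‖_p^p`, because `μ(X) ≤ ∑ 2⁻ⁱ < ∞` and Hölder's inequality give
`(‖f‖₁ / μ(X)) ^ p μ(X) ≤ ‖f‖_p^p`.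
-/

open Set

section Averages

variable {α : Type*} [MeasurableSpace α] {dist : α → α → ℝ} {μ : Measure α} {k : ℝ}
  {f : α → ℝ≥0∞}

noncomputable def ballAverage (dist : α → α → ℝ) (μ : Measure α) (k : ℝ) (f : α → ℝ≥0∞)
    (c : α) (r : ℝ) : ℝ≥0∞ :=
  (∫⁻ y in {y | dist c y < r}, f y ∂μ) / μ {y | dist c y < k * r}

lemma ballAverage_le_MkOp {c x : α} {r : ℝ} (hr : 0 < r) (hcx : dist c x < r) :
    ballAverage dist μ k f c r ≤ MkOp dist μ k f x :=
  le_iSup₂_of_le c r (le_iSup₂_of_le (α := ℝ≥0∞) hr hcx le_rfl)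

lemma MkOp_le {x : α} {B : ℝ≥0∞}
    (h : ∀ c r, 0 < r → dist c x < r → ballAverage dist μ k f c r ≤ B) :
    MkOp dist μ k f x ≤ B :=
  iSup₂_le fun c r => iSup₂_le (h c r)

lemma ballAverage_le_ballAverage {c : α} {r r' : ℝ} (hk : 0 ≤ k) (hr : r' ≤ r)
    (hball : {y | dist c y < r} ⊆ {y | dist c y < r'}) :
    ballAverage dist μ k f c r ≤ ballAverage dist μ k f c r' :=
  ENNReal.div_le_div (lintegral_mono_set hball)
    (measure_mono fun _ hy => lt_of_lt_of_le hy (mul_le_mul_of_nonneg_left hr hk))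

lemma ballAverage_le_of_dilate_eq_univ {c : α} {r : ℝ} (h : {y | dist c y < k * r} = univ) :
    ballAverage dist μ k f c r ≤ (∫⁻ y, f y ∂μ) / μ univ := by
  rw [ballAverage, h]
  exact ENNReal.div_le_div_right (setLIntegral_le_lintegral _ _) _

lemma lintegral_div_measure_univ_rpow_mul_le {p : ℝ} (hp : 1 ≤ p) (hf : AEMeasurable f μ)
    (hμ : μ univ ≠ ∞) :
    ((∫⁻ y, f y ∂μ) / μ univ) ^ p * μ univ ≤ ∫⁻ y, f y ^ p ∂μ := by
  rcases eq_or_ne (μ univ) 0 with h0 | h0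
  · simp [h0]
  have : IsFiniteMeasure μ := ⟨hμ.lt_top⟩
  have : NeZero μ := ⟨fun h => h0 (by simp [h])⟩
  -- Compare the `L¹` and `Lᵖ` norms for the probability measure `μ / μ univ`.
  have h := eLpNorm'_le_eLpNorm'_of_exponent_le one_pos hp ((μ univ)⁻¹ • μ)
    (hf.smul_measure _).aestronglyMeasurable
  simp only [eLpNorm'_eq_lintegral_enorm, enorm_eq_self, lintegral_smul_measure, smul_eq_mul,
    ENNReal.rpow_one, div_one] at h
  calc ((∫⁻ y, f y ∂μ) / μ univ) ^ p * μ univ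
      = ((μ univ)⁻¹ * ∫⁻ y, f y ∂μ) ^ p * μ univ := by
        rw [div_eq_mul_inv, mul_comm (∫⁻ y, f y ∂μ)]
    _ ≤ (((μ univ)⁻¹ * ∫⁻ y, f y ^ p ∂μ) ^ (1 / p)) ^ p * μ univ := by gcongr
    _ = ∫⁻ y, f y ^ p ∂μ := by
      rw [← ENNReal.rpow_mul, one_div_mul_cancel (by positivity), ENNReal.rpow_one, mul_comm,
        ← mul_assoc, ENNReal.mul_inv_cancel h0 hμ, one_mul]

end Averages

section SigmaMk

variable {ι : Type*} {β : ι → Type*} [∀ i, MeasurableSpace (β i)]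

lemma measurable_sigmaMk (i : ι) : Measurable (Sigma.mk i : β i → Σ j, β j) :=
  measurable_iff_le_map.2 (iInf_le _ i)

lemma measurableEmbedding_sigmaMk (i : ι) :
    MeasurableEmbedding (Sigma.mk i : β i → Σ j, β j) where
  injective := sigma_mk_injective
  measurable := measurable_sigmaMk i
  measurableSet_image' s hs := by
    refine MeasurableSpace.measurableSet_iInf.2 fun j => ?_
    rcases eq_or_ne i j with rfl | hij
    · change MeasurableSet (Sigma.mk i ⁻¹' (Sigma.mk i '' s))
      rwa [sigma_mk_preimage_image_eq_self]
    · change MeasurableSet (Sigma.mk j ⁻¹' (Sigma.mk i '' s))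
      rw [sigma_mk_preimage_image' hij]
      exact .empty

end SigmaMk

section UnionMeasure

variable {Λ : Set ℕ} {X : Λ → Type*} [∀ i, MeasurableSpace (X i)] (μ : ∀ i, Measure (X i))

lemma unionMeasure_apply (A : Set (Σ i, X i)) :
    unionMeasure X μ A = ∑' i, μ i (Sigma.mk i ⁻¹' A) := by
  rw [unionMeasure, Measure.sum_apply_of_countable]
  exact tsum_congr fun i => (measurableEmbedding_sigmaMk i).map_apply _ _

lemma setLIntegral_unionMeasure (f : (Σ i, X i) → ℝ≥0∞) (A : Set (Σ i, X i)) :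
    ∫⁻ y in A, f y ∂(unionMeasure X μ) = ∑' i, ∫⁻ x in Sigma.mk i ⁻¹' A, f ⟨i, x⟩ ∂(μ i) := by
  rw [unionMeasure, Measure.restrict_sum_of_countable, lintegral_sum_measure]
  refine tsum_congr fun i => ?_
  rw [(measurableEmbedding_sigmaMk i).restrict_map, (measurableEmbedding_sigmaMk i).lintegral_map]

lemma lintegral_unionMeasure (f : (Σ i, X i) → ℝ≥0∞) :
    ∫⁻ y, f y ∂(unionMeasure X μ) = ∑' i, ∫⁻ x, f ⟨i, x⟩ ∂(μ i) := by
  simpa using setLIntegral_unionMeasure μ f univ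

lemma unionMeasure_image_sigmaMk (i : Λ) (s : Set (X i)) :
    unionMeasure X μ (Sigma.mk i '' s) = μ i s := by
  rw [unionMeasure_apply, tsum_eq_single i fun j hj => by
    rw [sigma_mk_preimage_image' (Ne.symm hj), measure_empty], sigma_mk_preimage_image_eq_self]

lemma setLIntegral_unionMeasure_image_sigmaMk (f : (Σ i, X i) → ℝ≥0∞) (i : Λ) (s : Set (X i)) :
    ∫⁻ y in Sigma.mk i '' s, f y ∂(unionMeasure X μ) = ∫⁻ x in s, f ⟨i, x⟩ ∂(μ i) := by
  rw [setLIntegral_unionMeasure, tsum_eq_single i fun j hj => by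
    rw [sigma_mk_preimage_image' (Ne.symm hj), Measure.restrict_empty, lintegral_zero_measure],
    sigma_mk_preimage_image_eq_self]

lemma lintegral_unionMeasure_of_eq_zero {f : (Σ i, X i) → ℝ≥0∞} (i : Λ)
    (hf : ∀ y : Σ i, X i, y.1 ≠ i → f y = 0) :
    ∫⁻ y, f y ∂(unionMeasure X μ) = ∫⁻ x, f ⟨i, x⟩ ∂(μ i) := by
  rw [lintegral_unionMeasure, tsum_eq_single i fun j hj => by simp [hf ⟨j, _⟩ hj]]

lemma unionMeasure_univ_ne_top (hμ : ∀ i : Λ, μ i univ ≤ 2 ^ (-((i : ℕ) : ℤ))) :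
    unionMeasure X μ univ ≠ ∞ := by
  have hgeom : ∑' n : ℕ, (2 : ℝ≥0∞) ^ (-(n : ℤ)) = 2 := by
    simp_rw [ENNReal.zpow_neg, zpow_natCast, ENNReal.inv_pow]
    exact ENNReal.tsum_geometric_two
  refine ne_top_of_le_ne_top (b := 2) ENNReal.ofNat_ne_top ?_
  calc unionMeasure X μ univ = ∑' i : Λ, μ i univ := by simp [unionMeasure_apply]
    _ ≤ ∑' i : Λ, (2 : ℝ≥0∞) ^ (-((i : ℕ) : ℤ)) := ENNReal.tsum_le_tsum hμ
    _ ≤ ∑' n : ℕ, (2 : ℝ≥0∞) ^ (-(n : ℤ)) :=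
      ENNReal.tsum_comp_le_tsum_of_injective Subtype.val_injective _
    _ = 2 := hgeom

end UnionMeasure

section UnionDist

variable {Λ : Set ℕ} {X : Λ → Type*} {d : ∀ i, X i → X i → ℝ} {k₀ : ℝ}

lemma unionDist_mk_self (i : Λ) (a b : X i) : unionDist X d k₀ ⟨i, a⟩ ⟨i, b⟩ = d i a b := by
  simp [unionDist]

lemma unionDist_mk_of_ne {i j : Λ} (h : i ≠ j) (a : X i) (b : X j) :
    unionDist X d k₀ ⟨i, a⟩ ⟨j, b⟩ = k₀ + 1 := by
  simp [unionDist, h]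

lemma setOf_unionDist_mk_lt {r : ℝ} (hr : r ≤ k₀ + 1) (i : Λ) (c : X i) :
    {y | unionDist X d k₀ ⟨i, c⟩ y < r} = Sigma.mk i '' {x | d i c x < r} := by
  ext ⟨j, y⟩
  rcases eq_or_ne i j with rfl | hij
  · simp [unionDist_mk_self]
  · simp [unionDist_mk_of_ne hij, hr.not_gt, hij]

lemma setOf_unionDist_lt_eq_univ (hdiam : ∀ i (x y : X i), d i x y ≤ 1) {r : ℝ} (h1 : 1 < r)
    (hr : k₀ + 1 < r) (c : Σ i, X i) : {y | unionDist X d k₀ c y < r} = univ := by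
  refine eq_univ_of_forall fun ⟨j, y⟩ => ?_
  obtain ⟨i, c⟩ := c
  rcases eq_or_ne i j with rfl | hij
  · simpa [unionDist_mk_self] using (hdiam i c y).trans_lt h1
  · simpa [unionDist_mk_of_ne hij] using hr

end UnionDist

section MaximalOperator

variable {Λ : Set ℕ} {X : Λ → Type*} [∀ i, MeasurableSpace (X i)] {d : ∀ i, X i → X i → ℝ}
  {μ : ∀ i, Measure (X i)} {k₀ k : ℝ}

lemma ballAverage_unionDist_mk {r : ℝ} (hr : r ≤ k₀ + 1) (hkr : k * r ≤ k₀ + 1)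
    (f : (Σ i, X i) → ℝ≥0∞) (i : Λ) (c : X i) :
    ballAverage (unionDist X d k₀) (unionMeasure X μ) k f ⟨i, c⟩ r
      = ballAverage (d i) (μ i) k (fun x => f ⟨i, x⟩) c r := by
  rw [ballAverage, ballAverage, setOf_unionDist_mk_lt hr, setOf_unionDist_mk_lt hkr,
    setLIntegral_unionMeasure_image_sigmaMk, unionMeasure_image_sigmaMk]

lemma MkOp_le_MkOp_unionDist (hk : 1 ≤ k) (hkk₀ : k < k₀ + 1)
    (hdiam : ∀ i (x y : X i), d i x y ≤ 1) (f : (Σ i, X i) → ℝ≥0∞) (i : Λ) (x : X i) :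
    MkOp (d i) (μ i) k (fun z => f ⟨i, z⟩) x
      ≤ MkOp (unionDist X d k₀) (unionMeasure X μ) k f ⟨i, x⟩ := by
  have hk0 : 0 < k := one_pos.trans_le hk
  have h1 : 1 < (k₀ + 1) / k := by rwa [one_lt_div hk0]
  refine MkOp_le fun c r hr hcx => ?_
  -- Capping the radius at `(k₀ + 1) / k > 1 ≥ diam` does not shrink the ball, and keeps the
  -- dilated ball inside the component `X i`.
  set r' := min r ((k₀ + 1) / k)
  have hsub : {y | d i c y < r} ⊆ {y | d i c y < r'} := fun y hy =>
    lt_min hy ((hdiam i c y).trans_lt h1)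
  have hkr' : k * r' ≤ k₀ + 1 :=
    (mul_le_mul_of_nonneg_left (min_le_right _ _) hk0.le).trans (mul_div_cancel₀ _ hk0.ne').le
  have hr' : 0 < r' := lt_min hr (one_pos.trans h1)
  calc ballAverage (d i) (μ i) k (fun z => f ⟨i, z⟩) c r
      ≤ ballAverage (d i) (μ i) k (fun z => f ⟨i, z⟩) c r' :=
        ballAverage_le_ballAverage hk0.le (min_le_left _ _) hsub
    _ = ballAverage (unionDist X d k₀) (unionMeasure X μ) k f ⟨i, c⟩ r' :=
        (ballAverage_unionDist_mk ((le_mul_of_one_le_left hr'.le hk).trans hkr') hkr' f i c).symm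
    _ ≤ _ := ballAverage_le_MkOp hr' (by rw [unionDist_mk_self]; exact hsub hcx)

lemma MkOp_unionDist_le (hk : 1 ≤ k) (hk₀ : 0 ≤ k₀) (hdiam : ∀ i (x y : X i), d i x y ≤ 1)
    (f : (Σ i, X i) → ℝ≥0∞) (i : Λ) (x : X i) :
    MkOp (unionDist X d k₀) (unionMeasure X μ) k f ⟨i, x⟩
      ≤ max (MkOp (d i) (μ i) k (fun z => f ⟨i, z⟩) x)
          ((∫⁻ y, f y ∂(unionMeasure X μ)) / unionMeasure X μ univ) := by
  refine MkOp_le fun ⟨j, c⟩ r hr hcx => ?_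
  rcases lt_or_ge (k₀ + 1) (k * r) with hbig | hsmall
  · exact le_max_of_le_right <| ballAverage_le_of_dilate_eq_univ <|
      setOf_unionDist_lt_eq_univ hdiam (by linarith) hbig _
  · have hr' : r ≤ k₀ + 1 := (le_mul_of_one_le_left hr.le hk).trans hsmall
    obtain rfl : j = i := by
      by_contra hji
      rw [unionDist_mk_of_ne hji] at hcx
      linarith
    rw [unionDist_mk_self] at hcx
    rw [ballAverage_unionDist_mk hr' hsmall]
    exact le_max_of_le_left (ballAverage_le_MkOp hr hcx)

lemma lintegral_MkOp_unionDist_rpow_le {p : ℝ} (hp : 1 ≤ p) (hk : 1 ≤ k) (hk₀ : 0 ≤ k₀)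
    (hdiam : ∀ i (x y : X i), d i x y ≤ 1) (hμ : unionMeasure X μ univ ≠ ∞) {c : ℝ≥0∞}
    (hc : ∀ (i : Λ) (g : X i → ℝ≥0∞), Measurable g →
      ∫⁻ x, (MkOp (d i) (μ i) k g x) ^ p ∂(μ i) ≤ c ^ p * ∫⁻ x, g x ^ p ∂(μ i))
    {f : (Σ i, X i) → ℝ≥0∞} (hf : Measurable f) :
    ∫⁻ x, (MkOp (unionDist X d k₀) (unionMeasure X μ) k f x) ^ p ∂(unionMeasure X μ)
      ≤ (c ^ p + 1) * ∫⁻ x, f x ^ p ∂(unionMeasure X μ) := by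
  set ν := unionMeasure X μ
  set B := (∫⁻ y, f y ∂ν) / ν univ
  have hp0 : 0 ≤ p := by linarith
  have hpoint : ∀ i x, (MkOp (unionDist X d k₀) ν k f ⟨i, x⟩) ^ p
      ≤ (MkOp (d i) (μ i) k (fun z => f ⟨i, z⟩) x) ^ p + B ^ p := fun i x => by
    refine (ENNReal.rpow_le_rpow (MkOp_unionDist_le hk hk₀ hdiam f i x) hp0).trans ?_
    rw [ENNReal.max_rpow hp0]
    exact max_le_add_of_nonneg zero_le zero_le
  calc ∫⁻ x, (MkOp (unionDist X d k₀) ν k f x) ^ p ∂ν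
      = ∑' i, ∫⁻ x, (MkOp (unionDist X d k₀) ν k f ⟨i, x⟩) ^ p ∂(μ i) :=
        lintegral_unionMeasure μ _
    _ ≤ ∑' i, (∫⁻ x, (MkOp (d i) (μ i) k (fun z => f ⟨i, z⟩) x) ^ p ∂(μ i) + B ^ p * μ i univ) :=
        ENNReal.tsum_le_tsum fun i => (lintegral_mono (hpoint i)).trans_eq <| by
          rw [lintegral_add_right _ measurable_const, lintegral_const]
    _ ≤ ∑' i, (c ^ p * ∫⁻ x, f ⟨i, x⟩ ^ p ∂(μ i) + B ^ p * μ i univ) :=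
        ENNReal.tsum_le_tsum fun i => by gcongr; exact hc i _ (hf.comp (measurable_sigmaMk i))
    _ = c ^ p * ∫⁻ x, f x ^ p ∂ν + B ^ p * ν univ := by
        rw [ENNReal.tsum_add, ENNReal.tsum_mul_left, ENNReal.tsum_mul_left,
          lintegral_unionMeasure, unionMeasure_apply]
        simp only [preimage_univ]
    _ ≤ c ^ p * ∫⁻ x, f x ^ p ∂ν + ∫⁻ x, f x ^ p ∂ν := by
        gcongr
        exact lintegral_div_measure_univ_rpow_mul_le hp hf.aemeasurable hμ
    _ = (c ^ p + 1) * ∫⁻ x, f x ^ p ∂ν := by ring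

lemma lintegral_MkOp_rpow_le_of_unionDist {p : ℝ} (hp : 0 < p) (hk : 1 ≤ k)
    (hkk₀ : k < k₀ + 1) (hdiam : ∀ i (x y : X i), d i x y ≤ 1) {C : ℝ≥0∞}
    (hC : ∀ f : (Σ i, X i) → ℝ≥0∞, Measurable f →
      ∫⁻ x, (MkOp (unionDist X d k₀) (unionMeasure X μ) k f x) ^ p ∂(unionMeasure X μ)
        ≤ C ^ p * ∫⁻ x, f x ^ p ∂(unionMeasure X μ))
    (i : Λ) {g : X i → ℝ≥0∞} (hg : Measurable g) :
    ∫⁻ x, (MkOp (d i) (μ i) k g x) ^ p ∂(μ i) ≤ C ^ p * ∫⁻ x, g x ^ p ∂(μ i) := by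
  set f : (Σ j, X j) → ℝ≥0∞ := Function.extend (Sigma.mk i) g 0
  have hfi : ∀ x, f ⟨i, x⟩ = g x := sigma_mk_injective.extend_apply g 0
  have hf0 : ∀ y : Σ j, X j, y.1 ≠ i → f y = 0 := fun ⟨j, y⟩ hj =>
    Function.extend_apply' _ _ _ fun ⟨x, hx⟩ => hj (congrArg Sigma.fst hx).symm
  have hf : Measurable f := (measurableEmbedding_sigmaMk i).measurable_extend hg measurable_const
  calc ∫⁻ x, (MkOp (d i) (μ i) k g x) ^ p ∂(μ i)
      ≤ ∫⁻ x, (MkOp (unionDist X d k₀) (unionMeasure X μ) k f ⟨i, x⟩) ^ p ∂(μ i) :=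
        lintegral_mono fun x => by
          gcongr
          simpa only [hfi] using MkOp_le_MkOp_unionDist hk hkk₀ hdiam f i x
    _ ≤ ∫⁻ y, (MkOp (unionDist X d k₀) (unionMeasure X μ) k f y) ^ p ∂(unionMeasure X μ) := by
        rw [lintegral_unionMeasure]
        exact ENNReal.le_tsum i
    _ ≤ C ^ p * ∫⁻ y, f y ^ p ∂(unionMeasure X μ) := hC f hf
    _ = C ^ p * ∫⁻ x, g x ^ p ∂(μ i) := by
        rw [lintegral_unionMeasure_of_eq_zero μ i fun y hy => by
          rw [hf0 y hy, ENNReal.zero_rpow_of_pos hp]]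
        simp only [hfi]

end MaximalOperator

/-- Proposition 1 for the non-centered operator: for the disjoint union `𝔛` of spaces `𝔛_i`
(each of diameter `≤ 1` and total measure `≤ 2^(-i)`, glued at mutual distance `k₀ + 1`) and
`1 ≤ k ≤ k₀`, `p ∈ [1,∞)`, the operator `M_{k,𝔛}` is of strong type `(p,p)` iff the
operators `M_{k,𝔛_i}` satisfy the strong type `(p,p)` inequality with a constant independent
of `i`; moreover if each constant is at most `c̃` then
`‖M_{k,𝔛} f‖_p^p ≤ (c̃^p + 1) ‖f‖_p^p`. -/
theorem stmt15 (Λ : Set ℕ) (X : Λ → Type*) [∀ i, MeasurableSpace (X i)]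
    (d : ∀ i, X i → X i → ℝ) (μ : ∀ i, Measure (X i))
    (k₀ k p : ℝ) (hk₀ : 1 ≤ k₀) (hk1 : 1 ≤ k) (hkk₀ : k ≤ k₀) (hp : 1 ≤ p)
    (hdiam : ∀ i (x y : X i), d i x y ≤ 1)
    (hμtot : ∀ i : Λ, μ i Set.univ ≤ 2 ^ (-((i : ℕ) : ℤ))) :
    ((∃ C : ℝ≥0∞, C ≠ ∞ ∧ ∀ f : (Σ i, X i) → ℝ≥0∞, Measurable f →
        ∫⁻ x, (MkOp (unionDist X d k₀) (unionMeasure X μ) k f x) ^ p ∂(unionMeasure X μ)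
          ≤ C ^ p * ∫⁻ x, f x ^ p ∂(unionMeasure X μ))
      ↔ (∃ c : ℝ≥0∞, c ≠ ∞ ∧ ∀ (i : Λ) (g : X i → ℝ≥0∞), Measurable g →
          ∫⁻ x, (MkOp (d i) (μ i) k g x) ^ p ∂(μ i) ≤ c ^ p * ∫⁻ x, g x ^ p ∂(μ i))) ∧
    ∀ c : ℝ≥0∞,
      (∀ (i : Λ) (g : X i → ℝ≥0∞), Measurable g →
        ∫⁻ x, (MkOp (d i) (μ i) k g x) ^ p ∂(μ i) ≤ c ^ p * ∫⁻ x, g x ^ p ∂(μ i)) →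
      ∀ f : (Σ i, X i) → ℝ≥0∞, Measurable f →
        ∫⁻ x, (MkOp (unionDist X d k₀) (unionMeasure X μ) k f x) ^ p ∂(unionMeasure X μ)
          ≤ (c ^ p + 1) * ∫⁻ x, f x ^ p ∂(unionMeasure X μ) := by
  have hp0 : 0 < p := one_pos.trans_le hp
  have hμ := unionMeasure_univ_ne_top μ hμtot
  refine ⟨⟨fun ⟨C, hC, hCf⟩ => ⟨C, hC, fun i g hg => ?_⟩, fun ⟨c, hc, hcg⟩ =>
    ⟨(c ^ p + 1) ^ p⁻¹, ?_, fun f hf => ?_⟩⟩, fun c hc f hf => ?_⟩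
  · exact lintegral_MkOp_rpow_le_of_unionDist hp0 hk1 (by linarith) hdiam hCf i hg
  · exact ENNReal.rpow_ne_top_of_nonneg (by positivity) (by finiteness)
  · rw [← ENNReal.rpow_mul, inv_mul_cancel₀ hp0.ne', ENNReal.rpow_one]
    exact lintegral_MkOp_unionDist_rpow_le hp hk1 (zero_le_one.trans hk₀) hdiam hμ hcg hf
  · exact lintegral_MkOp_unionDist_rpow_le hp hk1 (zero_le_one.trans hk₀) hdiam hμ hc hf
end
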